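/- arXiv:0910.1359 — 10 statements merged into one kernel-verified Lean document; each statement's English description precedes it below -/
import Mathlib

section
/- Let Y be a real-valued random variable with probability density function g such that g is nondecreasing on (-∞, b] and nonincreasing on [b, ∞) for some real b, with M = sup g = g(b). Then for every z ∈ (0, 1], |P({Y} < z) − z| < 2M, where {Y} denotes the fractional part of Y. -/
/-!
The unit cell `[n, n + 1)` contributes
`d n = μ[n, n + z) - z μ[n, n + 1) = (1 - z) μ[n, n + z) - z μ[n + z, n + 1)` to
`P({Y} < z) - z`. Comparing `g` with its values at `n`, `n + z`, `n + 1`: on a cell where `g` is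
nondecreasing, `z (1 - z) (g n - g (n + 1)) ≤ d n ≤ 0`; on a cell where `g` is nonincreasing,
`0 ≤ d n ≤ z (1 - z) (g n - g (n + 1))`; and always `|d n| ≤ z (1 - z) M`. The cells left of the
mode therefore telescope to a sum in `[-z (1 - z) M, 0]`, those right of it to one in
`[0, z (1 - z) M]`, and with the cell containing the mode
`|P({Y} < z) - z| ≤ 2 z (1 - z) M ≤ M / 2 < 2 M`.
-/

open MeasureTheory Set Function

lemma sum_range_le_of_le_sub_succ {u v : ℕ → ℝ} (hv : ∀ k, 0 ≤ v k)
    (huv : ∀ k, u k ≤ v k - v (k + 1)) (n : ℕ) : ∑ k ∈ Finset.range n, u k ≤ v 0 :=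
  calc ∑ k ∈ Finset.range n, u k ≤ ∑ k ∈ Finset.range n, (v k - v (k + 1)) :=
        Finset.sum_le_sum fun k _ => huv k
    _ = v 0 - v n := Finset.sum_range_sub' v n
    _ ≤ v 0 := sub_le_self _ (hv n)

lemma HasSum.abs_le_two_mul_of_increment_bounds {d v : ℤ → ℝ} {s C : ℝ} (hs : HasSum d s)
    (n₀ : ℤ) (hv0 : ∀ n, 0 ≤ v n) (hvC : ∀ n, v n ≤ C)
    (hleft : ∀ n < n₀, v n - v (n + 1) ≤ d n ∧ d n ≤ 0)
    (hright : ∀ n > n₀, 0 ≤ d n ∧ d n ≤ v n - v (n + 1))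
    (hmid : |d n₀| ≤ C) : |s| ≤ 2 * C := by
  have hR0 (k : ℕ) : 0 ≤ d (n₀ + (k + 1)) := (hright (n₀ + (k + 1)) (by omega)).1
  have hL0 (k : ℕ) : 0 ≤ -d (n₀ + -(k + 1)) :=
    neg_nonneg.2 (hleft (n₀ + -(k + 1)) (by omega)).2
  have hR (n : ℕ) : ∑ k ∈ Finset.range n, d (n₀ + (k + 1)) ≤ C := by
    refine (sum_range_le_of_le_sub_succ (v := fun k : ℕ => v (n₀ + (k + 1)))
      (fun k => hv0 _) (fun k => ?_) n).trans (hvC _)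
    have := (hright (n₀ + (k + 1)) (by omega)).2
    push_cast
    rwa [add_assoc n₀] at this
  have hL (n : ℕ) : ∑ k ∈ Finset.range n, -d (n₀ + -(k + 1)) ≤ C := by
    refine (sum_range_le_of_le_sub_succ (v := fun k : ℕ => v (n₀ + -k))
      (fun k => hv0 _) (fun k => ?_) n).trans (by simpa using hvC n₀)
    have := (hleft (n₀ + -(k + 1)) (by omega)).1
    rw [show n₀ + -((k : ℤ) + 1) + 1 = n₀ + -k by ring] at this
    push_cast
    linarith
  have hsplit := HasSum.of_add_one_of_neg_add_one (f := fun n => d (n₀ + n))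
    (summable_of_sum_range_le hR0 hR).hasSum
    (by simpa only [neg_neg] using (summable_of_sum_range_le hL0 hL).hasSum.neg)
  have hs' : HasSum (fun n => d (n₀ + n)) s := (Equiv.addLeft n₀).hasSum_iff.mpr hs
  rw [hs'.unique hsplit, add_zero]
  have := tsum_nonneg (L := .unconditional ℕ) hR0
  have := tsum_nonneg (L := .unconditional ℕ) hL0
  have := Real.tsum_le_of_sum_range_le hR0 hR
  have := Real.tsum_le_of_sum_range_le hL0 hL
  rw [abs_le] at hmid ⊢
  constructor <;> linarith

lemma setOf_fract_lt_eq_iUnion {R : Type*} [CommRing R] [LinearOrder R]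
    [IsStrictOrderedRing R] [FloorRing R] {z : R} (hz : z ≤ 1) :
    {y : R | Int.fract y < z} = ⋃ n : ℤ, Ico (n : R) (n + z) := by
  ext y
  simp only [mem_ofPred_eq, mem_iUnion, mem_Ico, ← Int.self_sub_floor]
  constructor
  · exact fun h => ⟨⌊y⌋, Int.floor_le y, by linarith⟩
  · rintro ⟨n, hny, hyn⟩
    rw [Int.floor_eq_iff.2 ⟨hny, by linarith⟩]
    linarith

lemma hasSum_measureReal_iUnion {α ι : Type*} [MeasurableSpace α] [Countable ι]
    {μ : Measure α} [IsFiniteMeasure μ] {s : ι → Set α} (hs : ∀ i, MeasurableSet (s i))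
    (hd : Pairwise (Disjoint on s)) : HasSum (fun i => μ.real (s i)) (μ.real (⋃ i, s i)) := by
  have h := measure_iUnion (μ := μ) hd hs
  rw [Measure.real, h, ENNReal.tsum_toReal_eq fun i => measure_ne_top μ _]
  exact ENNReal.hasSum_toReal (h ▸ measure_ne_top μ _)

section Density

variable {μ : Measure ℝ} {g : ℝ → ℝ}

lemma measureReal_Ico_le_of_density_le
    (hμ : μ = volume.withDensity fun x => ENNReal.ofReal (g x)) {u v w : ℝ} (huv : u ≤ v)
    (hw : 0 ≤ w) (hg : ∀ x ∈ Ico u v, g x ≤ w) : μ.real (Ico u v) ≤ (v - u) * w := by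
  refine ENNReal.toReal_le_of_le_ofReal (mul_nonneg (sub_nonneg.2 huv) hw) ?_
  rw [hμ, withDensity_apply _ measurableSet_Ico, ENNReal.ofReal_mul (sub_nonneg.2 huv),
    ← Real.volume_Ico, mul_comm, ← setLIntegral_const]
  exact setLIntegral_mono' measurableSet_Ico fun x hx => ENNReal.ofReal_le_ofReal (hg x hx)

lemma le_measureReal_Ico_of_le_density [IsFiniteMeasure μ]
    (hμ : μ = volume.withDensity fun x => ENNReal.ofReal (g x)) {u v w : ℝ}
    (hw : 0 ≤ w) (hg : ∀ x ∈ Ico u v, w ≤ g x) : (v - u) * w ≤ μ.real (Ico u v) := by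
  rw [Measure.real, ← ENNReal.ofReal_le_iff_le_toReal (measure_ne_top μ _),
    ENNReal.ofReal_mul' hw, ← Real.volume_Ico, hμ, withDensity_apply _ measurableSet_Ico,
    mul_comm, ← setLIntegral_const]
  exact setLIntegral_mono' measurableSet_Ico fun x hx => ENNReal.ofReal_le_ofReal (hg x hx)

lemma measureReal_Ico_mem_of_monotoneOn [IsFiniteMeasure μ]
    (hμ : μ = volume.withDensity fun x => ENNReal.ofReal (g x)) (hg0 : ∀ x, 0 ≤ g x)
    {u v : ℝ} (huv : u ≤ v) (hg : MonotoneOn g (Icc u v)) :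
    (v - u) * g u ≤ μ.real (Ico u v) ∧ μ.real (Ico u v) ≤ (v - u) * g v :=
  ⟨le_measureReal_Ico_of_le_density hμ (hg0 u) fun _ hx =>
      hg (left_mem_Icc.2 huv) (Ico_subset_Icc_self hx) hx.1,
    measureReal_Ico_le_of_density_le hμ huv (hg0 v) fun _ hx =>
      hg (Ico_subset_Icc_self hx) (right_mem_Icc.2 huv) hx.2.le⟩

lemma measureReal_Ico_mem_of_antitoneOn [IsFiniteMeasure μ]
    (hμ : μ = volume.withDensity fun x => ENNReal.ofReal (g x)) (hg0 : ∀ x, 0 ≤ g x)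
    {u v : ℝ} (huv : u ≤ v) (hg : AntitoneOn g (Icc u v)) :
    (v - u) * g v ≤ μ.real (Ico u v) ∧ μ.real (Ico u v) ≤ (v - u) * g u :=
  ⟨le_measureReal_Ico_of_le_density hμ (hg0 v) fun _ hx =>
      hg (Ico_subset_Icc_self hx) (right_mem_Icc.2 huv) hx.2.le,
    measureReal_Ico_le_of_density_le hμ huv (hg0 u) fun _ hx =>
      hg (left_mem_Icc.2 huv) (Ico_subset_Icc_self hx) hx.1⟩

lemma pos_of_density_le [IsProbabilityMeasure μ]
    (hμ : μ = volume.withDensity fun x => ENNReal.ofReal (g x)) {M : ℝ}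
    (hgM : ∀ x, g x ≤ M) : 0 < M := by
  by_contra! hM
  have hzero : (fun x => ENNReal.ofReal (g x)) = 0 :=
    funext fun x => ENNReal.ofReal_eq_zero.2 ((hgM x).trans hM)
  simpa [hμ, hzero] using measure_univ (μ := μ)

end Density

def cellDiscrepancy (μ : Measure ℝ) (z : ℝ) (n : ℤ) : ℝ :=
  μ.real (Ico (n : ℝ) (n + z)) - z * μ.real (Ico (n : ℝ) (n + 1))

section Cells

variable {μ : Measure ℝ} {g : ℝ → ℝ} {z : ℝ}

lemma hasSum_cellDiscrepancy [IsFiniteMeasure μ] (hz : z ≤ 1) :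
    HasSum (cellDiscrepancy μ z) (μ.real {y | Int.fract y < z} - z * μ.real univ) := by
  have hcells : ∀ w ≤ (1 : ℝ), HasSum (fun n : ℤ => μ.real (Ico (n : ℝ) (n + w)))
      (μ.real (⋃ n : ℤ, Ico (n : ℝ) (n + w))) := fun w hw =>
    hasSum_measureReal_iUnion (fun _ => measurableSet_Ico) <|
      (pairwise_disjoint_Ico_intCast ℝ).mono fun _ _ h =>
        h.mono (Ico_subset_Ico_right (by linarith)) (Ico_subset_Ico_right (by linarith))
  rw [setOf_fract_lt_eq_iUnion hz, ← iUnion_Ico_intCast ℝ]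
  exact (hcells z hz).sub ((hcells 1 le_rfl).mul_left z)

lemma cellDiscrepancy_eq [IsFiniteMeasure μ] (hz0 : 0 ≤ z) (hz1 : z ≤ 1) (n : ℤ) :
    cellDiscrepancy μ z n =
      (1 - z) * μ.real (Ico (n : ℝ) (n + z)) - z * μ.real (Ico (n + z : ℝ) (n + 1)) := by
  have h := measureReal_union (μ := μ) (Ico_disjoint_Ico_same (a := (n : ℝ)) (b := n + z)
    (c := n + 1)) measurableSet_Ico
  rw [Ico_union_Ico_eq_Ico (by linarith) (by linarith)] at h
  rw [cellDiscrepancy, h]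
  ring

lemma cellDiscrepancy_mem_of_monotoneOn [IsFiniteMeasure μ]
    (hμ : μ = volume.withDensity fun x => ENNReal.ofReal (g x)) (hg0 : ∀ x, 0 ≤ g x)
    (hz0 : 0 ≤ z) (hz1 : z ≤ 1) {n : ℤ} (hg : MonotoneOn g (Icc (n : ℝ) (n + 1))) :
    z * (1 - z) * (g n - g (n + 1)) ≤ cellDiscrepancy μ z n ∧
      cellDiscrepancy μ z n ≤ 0 := by
  obtain ⟨hA₁, hA₂⟩ :=
    measureReal_Ico_mem_of_monotoneOn hμ hg0 (u := n) (v := n + z) (by linarith)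
      (hg.mono (Icc_subset_Icc_right (by linarith)))
  obtain ⟨hB₁, hB₂⟩ :=
    measureReal_Ico_mem_of_monotoneOn hμ hg0 (u := n + z) (v := n + 1) (by linarith)
      (hg.mono (Icc_subset_Icc_left (by linarith)))
  rw [cellDiscrepancy_eq hz0 hz1]
  constructor <;> nlinarith

lemma cellDiscrepancy_mem_of_antitoneOn [IsFiniteMeasure μ]
    (hμ : μ = volume.withDensity fun x => ENNReal.ofReal (g x)) (hg0 : ∀ x, 0 ≤ g x)
    (hz0 : 0 ≤ z) (hz1 : z ≤ 1) {n : ℤ} (hg : AntitoneOn g (Icc (n : ℝ) (n + 1))) :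
    0 ≤ cellDiscrepancy μ z n ∧
      cellDiscrepancy μ z n ≤ z * (1 - z) * (g n - g (n + 1)) := by
  obtain ⟨hA₁, hA₂⟩ :=
    measureReal_Ico_mem_of_antitoneOn hμ hg0 (u := n) (v := n + z) (by linarith)
      (hg.mono (Icc_subset_Icc_right (by linarith)))
  obtain ⟨hB₁, hB₂⟩ :=
    measureReal_Ico_mem_of_antitoneOn hμ hg0 (u := n + z) (v := n + 1) (by linarith)
      (hg.mono (Icc_subset_Icc_left (by linarith)))
  rw [cellDiscrepancy_eq hz0 hz1]
  constructor <;> nlinarith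

lemma abs_cellDiscrepancy_le [IsFiniteMeasure μ]
    (hμ : μ = volume.withDensity fun x => ENNReal.ofReal (g x)) (hg0 : ∀ x, 0 ≤ g x) {M : ℝ}
    (hgM : ∀ x, g x ≤ M) (hz0 : 0 ≤ z) (hz1 : z ≤ 1) (n : ℤ) :
    |cellDiscrepancy μ z n| ≤ z * (1 - z) * M := by
  have hM : 0 ≤ M := (hg0 0).trans (hgM 0)
  have hA := measureReal_Ico_le_of_density_le hμ (u := n) (v := n + z) (by linarith) hM
    fun x _ => hgM x
  have hB := measureReal_Ico_le_of_density_le hμ (u := n + z) (v := n + 1) (by linarith) hM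
    fun x _ => hgM x
  have hA₀ : 0 ≤ μ.real (Ico (n : ℝ) (n + z)) := measureReal_nonneg
  have hB₀ : 0 ≤ μ.real (Ico (n + z : ℝ) (n + 1)) := measureReal_nonneg
  rw [cellDiscrepancy_eq hz0 hz1, abs_le]
  constructor <;> nlinarith

end Cells

/-- Scatter-and-regularity lemma: if `Y` has a unimodal density `g`
(nondecreasing up to `b`, nonincreasing afterwards) with maximum `M = g b`,
then for every `z ∈ (0,1]`, `|P({Y} < z) − z| < 2M`. -/
theorem fract_near_uniform_of_unimodal_density
    (μ : Measure ℝ) [IsProbabilityMeasure μ] (g : ℝ → ℝ) (b : ℝ)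
    (hg0 : ∀ x, 0 ≤ g x)
    (hμ : μ = volume.withDensity (fun x => ENNReal.ofReal (g x)))
    (hmono : MonotoneOn g (Iic b)) (hanti : AntitoneOn g (Ici b)) :
    ∀ z ∈ Ioc (0 : ℝ) 1,
      |(μ {y : ℝ | Int.fract y < z}).toReal - z| < 2 * g b := by
  have hgb (x : ℝ) : g x ≤ g b := (le_total x b).elim
    (fun h => hmono h self_mem_Iic h) (fun h => hanti self_mem_Ici h h)
  have hM := pos_of_density_le hμ hgb
  rintro z ⟨hz0, hz1⟩
  have hsum := hasSum_cellDiscrepancy (μ := μ) hz1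
  rw [probReal_univ, mul_one] at hsum
  have hC : 0 ≤ z * (1 - z) := mul_nonneg hz0.le (sub_nonneg.2 hz1)
  have key := hsum.abs_le_two_mul_of_increment_bounds ⌊b⌋ (v := fun n => z * (1 - z) * g n)
    (fun n => mul_nonneg hC (hg0 _)) (fun n => mul_le_mul_of_nonneg_left (hgb _) hC)
    (fun n hn => by
      have hcell : (n + 1 : ℝ) ≤ b := by
        exact_mod_cast Int.le_floor.1 (Int.add_one_le_iff.2 hn)
      simp only [Int.cast_add, Int.cast_one, ← mul_sub]
      exact cellDiscrepancy_mem_of_monotoneOn hμ hg0 hz0.le hz1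
        (hmono.mono fun x hx => hx.2.trans hcell))
    (fun n hn => by
      have hcell : b ≤ n := (Int.floor_lt.1 hn).le
      simp only [Int.cast_add, Int.cast_one, ← mul_sub]
      exact cellDiscrepancy_mem_of_antitoneOn hμ hg0 hz0.le hz1
        (hanti.mono fun x hx => hcell.trans hx.1))
    (abs_cellDiscrepancy_le hμ hg0 hgb hz0.le hz1 ⌊b⌋)
  have hC1 : z * (1 - z) < 1 := by nlinarith
  calc |(μ {y : ℝ | Int.fract y < z}).toReal - z| ≤ 2 * (z * (1 - z) * g b) := key
    _ < 2 * g b := by nlinarith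
end

section
/- Let (Xₙ) be a sequence of continuous positive random variables with densities fₙ, each satisfying: x ↦ x·fₙ(x) attains its maximum mₙ at some aₙ > 0, is nondecreasing on (0, aₙ] and nonincreasing on [aₙ, ∞). If mₙ → 0 as n → ∞, then {log₁₀ Xₙ} converges in law to the uniform distribution on [0, 1). -/
/-!
Pass to `Y = log₁₀ X`: its density `F u = log 10 · 10^u f(10^u)` is unimodal with maximum
`log 10 · m`, and `P({Y} < z) = ∑ₖ P(Y ∈ [k, k + z))`. Away from the mode, the mass of
`[k, k + z)` is at most `z · F` at the endpoint nearest the mode, which in turn is at most `z`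
times the mass of the neighbouring unit interval one step closer to the mode; the reverse
comparison works the same way. Shifting indices by one therefore matches `∑ₖ P(Y ∈ [k, k + z))`
against `z · ∑ₖ P(Y ∈ [k, k + 1)) = z` up to the (at most three) unit intervals around the mode,
each of mass at most `max F`. Hence `|P({Y} < z) - z| ≤ 3 log 10 · m → 0`.
-/

open MeasureTheory Set Filter Real
open scoped ENNReal

section WithDensity

variable {α : Type*} [MeasurableSpace α] {μ : Measure α} {g : α → ℝ≥0∞} {s t : Set α} {c : ℝ≥0∞}

theorem withDensity_apply_le_mul (hs : MeasurableSet s) (h : ∀ x ∈ s, g x ≤ c) :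
    μ.withDensity g s ≤ c * μ s := by
  rw [withDensity_apply _ hs, ← setLIntegral_const]
  exact setLIntegral_mono' hs h

theorem mul_le_withDensity_apply (hs : MeasurableSet s) (h : ∀ x ∈ s, c ≤ g x) :
    c * μ s ≤ μ.withDensity g s := by
  rw [withDensity_apply _ hs, ← setLIntegral_const]
  exact setLIntegral_mono' hs h

theorem withDensity_apply_mul_le_of_le_of_le (hs : MeasurableSet s) (ht : MeasurableSet t)
    (hsc : ∀ x ∈ s, g x ≤ c) (htc : ∀ x ∈ t, c ≤ g x) :
    μ.withDensity g s * μ t ≤ μ s * μ.withDensity g t :=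
  calc μ.withDensity g s * μ t ≤ c * μ s * μ t := by gcongr; exact withDensity_apply_le_mul hs hsc
    _ = μ s * (c * μ t) := by ring
    _ ≤ μ s * μ.withDensity g t := by gcongr; exact mul_le_withDensity_apply ht htc

end WithDensity

theorem ENNReal.tsum_le_tsum_add_of_le_shift {u v : ℤ → ℝ≥0∞} {k₀ : ℤ} {R : ℝ≥0∞}
    (hlo : ∀ k, k + 2 ≤ k₀ → u k ≤ v (k + 1)) (hhi : ∀ k, k₀ + 2 ≤ k → u k ≤ v (k - 1))
    (hR : ∀ k, u k ≤ R) :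
    ∑' k, u k ≤ ∑' k, v k + 3 * R := by
  set lo := (Iio k₀).indicator v
  set hi := (Ioi k₀).indicator v
  set mid := (↑(Finset.Icc (k₀ - 1) (k₀ + 1)) : Set ℤ).indicator fun _ => R
  have hu : ∀ k, u k ≤ lo (k + 1) + hi (k - 1) + mid k := by
    intro k
    by_cases h₁ : k + 2 ≤ k₀
    · have : k + 1 ∈ Iio k₀ := by simp only [mem_Iio]; omega
      simp only [lo, indicator_of_mem this]
      exact (hlo k h₁).trans (le_self_add.trans le_self_add)
    by_cases h₂ : k₀ + 2 ≤ k
    · have : k - 1 ∈ Ioi k₀ := by simp only [mem_Ioi]; omega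
      simp only [hi, indicator_of_mem this]
      exact (hhi k h₂).trans (le_add_self.trans le_self_add)
    have : k ∈ (↑(Finset.Icc (k₀ - 1) (k₀ + 1)) : Set ℤ) := by
      simp only [Finset.coe_Icc, mem_Icc]; omega
    simp only [mid, indicator_of_mem this]
    exact (hR k).trans le_add_self
  have hlo_hi : ∑' k, lo (k + 1) + ∑' k, hi (k - 1) ≤ ∑' k, v k := by
    rw [show ∑' k, lo (k + 1) = ∑' k, lo k from (Equiv.addRight 1).tsum_eq lo,
      show ∑' k, hi (k - 1) = ∑' k, hi k from (Equiv.subRight 1).tsum_eq hi, ← ENNReal.tsum_add]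
    refine ENNReal.tsum_le_tsum fun k => ?_
    exact (congrFun (indicator_union_of_disjoint (Iio_disjoint_Ioi_of_le le_rfl) v) k).symm.trans_le
      (indicator_le_self _ _ k)
  have hmid : ∑' k, mid k = 3 * R := by
    rw [← tsum_subtype, Finset.tsum_subtype' _ fun _ => R]
    simp [show k₀ + 1 + 1 - (k₀ - 1) = 3 by ring]
  calc ∑' k, u k ≤ ∑' k, (lo (k + 1) + hi (k - 1) + mid k) := ENNReal.tsum_le_tsum hu
    _ = ∑' k, lo (k + 1) + ∑' k, hi (k - 1) + 3 * R := by
      rw [ENNReal.tsum_add, ENNReal.tsum_add, hmid]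
    _ ≤ ∑' k, v k + 3 * R := by gcongr

theorem setOf_fract_lt_eq_iUnion_s2 {w : ℝ} (hw : w ≤ 1) :
    {x : ℝ | Int.fract x < w} = ⋃ k : ℤ, Ico (k : ℝ) (k + w) := by
  ext x
  simp only [mem_ofPred_eq, mem_iUnion, mem_Ico, Int.fract]
  constructor
  · exact fun h => ⟨⌊x⌋, Int.floor_le x, by linarith⟩
  · rintro ⟨k, hkx, hxk⟩
    rw [Int.floor_eq_iff.2 ⟨hkx, by linarith⟩]
    linarith

theorem measure_setOf_fract_lt (μ : Measure ℝ) {w : ℝ} (hw : w ≤ 1) :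
    μ {x | Int.fract x < w} = ∑' k : ℤ, μ (Ico (k : ℝ) (k + w)) := by
  rw [setOf_fract_lt_eq_iUnion_s2 hw]
  refine measure_iUnion ((pairwise_disjoint_Ico_intCast ℝ).mono fun k l h => ?_)
    fun _ => measurableSet_Ico
  exact h.mono (Ico_subset_Ico_right (by linarith)) (Ico_subset_Ico_right (by linarith))

theorem ENNReal.abs_toReal_sub_le_of_le_add {A : ℝ≥0∞} {z e : ℝ} (hA : A ≠ ∞) (hz : 0 ≤ z)
    (he : 0 ≤ e) (hle : A ≤ ENNReal.ofReal z + ENNReal.ofReal e)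
    (hge : ENNReal.ofReal z ≤ A + ENNReal.ofReal e) :
    |A.toReal - z| ≤ e := by
  rw [← ENNReal.ofReal_add hz he] at hle
  rw [← ENNReal.ofReal_toReal hA, ← ENNReal.ofReal_add ENNReal.toReal_nonneg he,
    ENNReal.ofReal_le_ofReal_iff (by positivity)] at hge
  have := ENNReal.toReal_le_of_le_ofReal (by positivity) hle
  rw [abs_le]
  constructor <;> linarith

noncomputable def logDensity (b : ℝ) (f : ℝ → ℝ) (u : ℝ) : ℝ := log b * (b ^ u * f (b ^ u))

theorem map_logb_withDensity {b : ℝ} (hb : 1 < b) {f : ℝ → ℝ} (hf : ∀ x ≤ 0, f x = 0) :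
    (volume.withDensity fun x => ENNReal.ofReal (f x)).map (logb b) =
      volume.withDensity fun u => ENNReal.ofReal (logDensity b f u) := by
  have hb0 : 0 < b := zero_lt_one.trans hb
  ext T hT
  have hlogb : Measurable (logb b) := by unfold logb; fun_prop
  have himage : logb b ⁻¹' T ∩ Ioi 0 = (b ^ ·) '' T := by
    ext x
    constructor
    · rintro ⟨hxT, hx⟩
      exact ⟨logb b x, hxT, rpow_logb hb0 hb.ne' hx⟩
    · rintro ⟨u, hu, rfl⟩
      exact ⟨by simpa [mem_preimage, logb_rpow hb0 hb.ne'] using hu, rpow_pos_of_pos hb0 u⟩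
  have hsupp :
      (fun x => ENNReal.ofReal (f x)) = (Ioi 0).indicator fun x => ENNReal.ofReal (f x) := by
    ext x
    by_cases hx : x ∈ Ioi 0
    · rw [indicator_of_mem hx]
    · rw [indicator_of_notMem hx, hf x (not_lt.1 (mem_Ioi.not.1 hx)), ENNReal.ofReal_zero]
  rw [Measure.map_apply hlogb hT, withDensity_apply _ (hlogb hT), withDensity_apply _ hT, hsupp,
    setLIntegral_indicator measurableSet_Ioi, inter_comm, himage,
    lintegral_image_eq_lintegral_abs_deriv_mul hT
      (fun u _ => (hasStrictDerivAt_const_rpow hb0 u).hasDerivAt.hasDerivWithinAt)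
      (strictMono_rpow_of_base_gt_one hb).injective.injOn]
  refine setLIntegral_congr_fun hT fun u _ => ?_
  have : 0 ≤ b ^ u * log b := mul_nonneg (rpow_nonneg hb0.le u) (log_nonneg hb.le)
  rw [abs_of_nonneg this, ← ENNReal.ofReal_mul this, logDensity]
  ring_nf

section LogDensity

variable {b a m : ℝ} {f : ℝ → ℝ}

theorem monotoneOn_logDensity (hb : 1 < b) (ha : 0 < a)
    (h : MonotoneOn (fun x => x * f x) (Ioc 0 a)) :
    MonotoneOn (logDensity b f) (Iic (logb b a)) := by
  have hb0 : 0 < b := zero_lt_one.trans hb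
  have hmaps : ∀ u ∈ Iic (logb b a), b ^ u ∈ Ioc 0 a := fun u hu =>
    ⟨rpow_pos_of_pos hb0 u, (le_logb_iff_rpow_le hb ha).1 hu⟩
  intro u hu v hv huv
  exact mul_le_mul_of_nonneg_left
    (h (hmaps u hu) (hmaps v hv) (rpow_le_rpow_of_exponent_le hb.le huv)) (log_nonneg hb.le)

theorem antitoneOn_logDensity (hb : 1 < b) (ha : 0 < a)
    (h : AntitoneOn (fun x => x * f x) (Ici a)) : AntitoneOn (logDensity b f) (Ici (logb b a)) := by
  have hmaps : ∀ u ∈ Ici (logb b a), b ^ u ∈ Ici a := fun u hu => (logb_le_iff_le_rpow hb ha).1 hu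
  intro u hu v hv huv
  exact mul_le_mul_of_nonneg_left
    (h (hmaps u hu) (hmaps v hv) (rpow_le_rpow_of_exponent_le hb.le huv)) (log_nonneg hb.le)

theorem logDensity_le (hb : 1 < b) (h : ∀ x, x * f x ≤ m) (u : ℝ) : logDensity b f u ≤ log b * m :=
  mul_le_mul_of_nonneg_left (h _) (log_nonneg hb.le)

end LogDensity

section Unimodal

variable {F : ℝ → ℝ} {t₀ : ℝ}

local notation "ν" => volume.withDensity fun u => ENNReal.ofReal (F u)

theorem volume_Ico_add (p w : ℝ) : volume (Ico p (p + w)) = ENNReal.ofReal w := by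
  rw [Real.volume_Ico, add_sub_cancel_left]

theorem withDensity_Ico_mul_le_of_add_two_le_floor (hmono : MonotoneOn F (Iic t₀)) {k : ℤ}
    (hk : k + 2 ≤ ⌊t₀⌋) {w w' : ℝ} (hw : w ≤ 1) (hw' : w' ≤ 1) :
    ν (Ico (k : ℝ) (k + w)) * ENNReal.ofReal w' ≤
      ENNReal.ofReal w * ν (Ico (↑(k + 1) : ℝ) (↑(k + 1) + w')) := by
  have hkt : (k : ℝ) + 2 ≤ t₀ := by exact_mod_cast Int.le_floor.1 hk
  rw [← volume_Ico_add (k : ℝ) w, ← volume_Ico_add (↑(k + 1) : ℝ) w']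
  refine withDensity_apply_mul_le_of_le_of_le measurableSet_Ico measurableSet_Ico
    (c := ENNReal.ofReal (F (k + 1))) (fun x hx => ?_) (fun x hx => ?_) <;>
    refine ENNReal.ofReal_le_ofReal ?_ <;> push_cast at hx
  · exact hmono (mem_Iic.2 (by linarith [hx.2])) (mem_Iic.2 (by linarith)) (by linarith [hx.2])
  · exact hmono (mem_Iic.2 (by linarith)) (mem_Iic.2 (by linarith [hx.2])) hx.1

theorem withDensity_Ico_mul_le_of_floor_add_two_le (hanti : AntitoneOn F (Ici t₀)) {k : ℤ}
    (hk : ⌊t₀⌋ + 2 ≤ k) {w w' : ℝ} (hw' : w' ≤ 1) :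
    ν (Ico (k : ℝ) (k + w)) * ENNReal.ofReal w' ≤
      ENNReal.ofReal w * ν (Ico (↑(k - 1) : ℝ) (↑(k - 1) + w')) := by
  have hkt : t₀ + 1 ≤ k := by
    have h1 := Int.lt_floor_add_one t₀
    have h2 : ((⌊t₀⌋ + 2 : ℤ) : ℝ) ≤ k := by exact_mod_cast hk
    push_cast at h2
    linarith
  rw [← volume_Ico_add (k : ℝ) w, ← volume_Ico_add (↑(k - 1) : ℝ) w']
  refine withDensity_apply_mul_le_of_le_of_le measurableSet_Ico measurableSet_Ico
    (c := ENNReal.ofReal (F k)) (fun x hx => ?_) (fun x hx => ?_) <;>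
    refine ENNReal.ofReal_le_ofReal ?_ <;> push_cast at hx
  · exact hanti (mem_Ici.2 (by linarith)) (mem_Ici.2 (by linarith [hx.1])) hx.1
  · exact hanti (mem_Ici.2 (by linarith [hx.1])) (mem_Ici.2 (by linarith)) (by linarith [hx.2])

theorem abs_toReal_withDensity_fract_lt_sub_le [IsProbabilityMeasure ν]
    (hmono : MonotoneOn F (Iic t₀)) (hanti : AntitoneOn F (Ici t₀)) {M z : ℝ}
    (hM : ∀ u, F u ≤ M) (hz0 : 0 ≤ z) (hz1 : z ≤ 1) :
    |(ν {u | Int.fract u < z}).toReal - z| ≤ 3 * M := by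
  have hbound : ∀ {k : ℤ} {w : ℝ}, w ≤ 1 → ν (Ico (k : ℝ) (k + w)) ≤ ENNReal.ofReal M := by
    intro k w hw
    refine (withDensity_apply_le_mul measurableSet_Ico fun x _ =>
      ENNReal.ofReal_le_ofReal (hM x)).trans ?_
    rw [volume_Ico_add]
    exact mul_le_of_le_one_right' (ENNReal.ofReal_le_one.2 hw)
  have hunit : ∑' k : ℤ, ν (Ico (k : ℝ) (k + 1)) = 1 := by
    rw [← measure_setOf_fract_lt _ le_rfl]
    simp [Int.fract_lt_one]
  have hM0 : 0 ≤ M := by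
    by_contra! hM0
    have : ∑' k : ℤ, ν (Ico (k : ℝ) (k + 1)) = 0 := ENNReal.tsum_eq_zero.2 fun k =>
      le_zero_iff.1 ((hbound le_rfl).trans_eq (ENNReal.ofReal_of_nonpos hM0.le))
    exact one_ne_zero (hunit.symm.trans this)
  have hscale : ∑' k : ℤ, ENNReal.ofReal z * ν (Ico (k : ℝ) (k + 1)) = ENNReal.ofReal z := by
    rw [ENNReal.tsum_mul_left, hunit, mul_one]
  have hle : ν {u | Int.fract u < z} ≤ ENNReal.ofReal z + 3 * ENNReal.ofReal M := by
    rw [measure_setOf_fract_lt _ hz1, ← hscale]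
    refine ENNReal.tsum_le_tsum_add_of_le_shift (k₀ := ⌊t₀⌋) (fun k hk => ?_) (fun k hk => ?_)
      fun k => hbound hz1
    · simpa using withDensity_Ico_mul_le_of_add_two_le_floor hmono hk hz1 le_rfl
    · simpa using withDensity_Ico_mul_le_of_floor_add_two_le hanti hk le_rfl (w := z)
  have hge : ENNReal.ofReal z ≤ ν {u | Int.fract u < z} + 3 * ENNReal.ofReal M := by
    rw [measure_setOf_fract_lt _ hz1, ← hscale]
    refine ENNReal.tsum_le_tsum_add_of_le_shift (k₀ := ⌊t₀⌋) (fun k hk => ?_) (fun k hk => ?_)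
      fun k => (mul_le_of_le_one_left' (ENNReal.ofReal_le_one.2 hz1)).trans (hbound le_rfl)
    · simpa [mul_comm] using withDensity_Ico_mul_le_of_add_two_le_floor hmono hk le_rfl hz1
    · simpa [mul_comm] using withDensity_Ico_mul_le_of_floor_add_two_le hanti hk hz1 (w := 1)
  rw [← ENNReal.ofReal_ofNat 3, ← ENNReal.ofReal_mul (by norm_num)] at hle hge
  exact ENNReal.abs_toReal_sub_le_of_le_add (measure_ne_top _ _) hz0 (by positivity) hle hge

end Unimodal

theorem benford_limit_of_scatter_regularity_general
    (μ : ℕ → Measure ℝ) (hprob : ∀ n, IsProbabilityMeasure (μ n))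
    (f : ℕ → ℝ → ℝ) (a m : ℕ → ℝ)
    (hsupp : ∀ n, ∀ x ≤ 0, f n x = 0)
    (hμ : ∀ n, μ n = volume.withDensity (fun x => ENNReal.ofReal (f n x)))
    (ha : ∀ n, 0 < a n)
    (hmax : ∀ n x, x * f n x ≤ m n)
    (hmono : ∀ n, MonotoneOn (fun x => x * f n x) (Ioc 0 (a n)))
    (hanti : ∀ n, AntitoneOn (fun x => x * f n x) (Ici (a n)))
    (hm0 : Tendsto m atTop (nhds 0)) :
    ∀ z ∈ Ico (0 : ℝ) 1,
      Tendsto (fun n => ((μ n) {x : ℝ | Int.fract (Real.logb 10 x) < z}).toReal)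
        atTop (nhds z) := by
  intro z hz
  have hb : (1 : ℝ) < 10 := by norm_num
  have hlogb : Measurable (logb 10) := by unfold logb; fun_prop
  have hbound : ∀ n,
      |((μ n) {x | Int.fract (logb 10 x) < z}).toReal - z| ≤ 3 * (log 10 * m n) := by
    intro n
    have hlaw := hμ n ▸ map_logb_withDensity hb (hsupp n)
    have : IsProbabilityMeasure ((μ n).map (logb 10)) :=
      Measure.isProbabilityMeasure_map hlogb.aemeasurable
    rw [hlaw] at this
    rw [show {x | Int.fract (logb 10 x) < z} = logb 10 ⁻¹' {u | Int.fract u < z} from rfl,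
      ← Measure.map_apply hlogb (measurableSet_lt measurable_fract measurable_const), hlaw]
    exact abs_toReal_withDensity_fract_lt_sub_le (monotoneOn_logDensity hb (ha n) (hmono n))
      (antitoneOn_logDensity hb (ha n) (hanti n)) (logDensity_le hb (hmax n)) hz.1 hz.2.le
  refine tendsto_iff_dist_tendsto_zero.2 (squeeze_zero (fun _ => dist_nonneg) hbound ?_)
  simpa using (hm0.const_mul (log 10)).const_mul 3

/-- Convergence part of Theorem 1: if each `Xₙ` has density `fₙ` with
`x ↦ x·fₙ(x)` unimodal with maximum `mₙ` attained at `aₙ > 0`, and `mₙ → 0`,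
then `{log₁₀ Xₙ}` converges in law to the uniform distribution on `[0,1)`. -/
theorem benford_limit_of_scatter_regularity
    (μ : ℕ → Measure ℝ) (hprob : ∀ n, IsProbabilityMeasure (μ n))
    (f : ℕ → ℝ → ℝ) (a m : ℕ → ℝ)
    (hf0 : ∀ n x, 0 ≤ f n x) (hsupp : ∀ n, ∀ x ≤ 0, f n x = 0)
    (hμ : ∀ n, μ n = volume.withDensity (fun x => ENNReal.ofReal (f n x)))
    (ha : ∀ n, 0 < a n) (hm : ∀ n, m n = a n * f n (a n))
    (hmax : ∀ n x, x * f n x ≤ m n)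
    (hmono : ∀ n, MonotoneOn (fun x => x * f n x) (Ioc 0 (a n)))
    (hanti : ∀ n, AntitoneOn (fun x => x * f n x) (Ici (a n)))
    (hm0 : Tendsto m atTop (nhds 0)) :
    ∀ z ∈ Ico (0 : ℝ) 1,
      Tendsto (fun n => ((μ n) {x : ℝ | Int.fract (Real.logb 10 x) < z}).toReal)
        atTop (nhds z) :=
  benford_limit_of_scatter_regularity_general μ hprob f a m hsupp hμ ha hmax hmono hanti hm0
end

section
/- Let X be a random variable taking values in a real interval I with density f, and let u : I → ℝ be a C¹ increasing function such that f/u′ attains its maximum m at some point a, is nondecreasing before a and nonincreasing after a (on I). Then for all z ∈ [0, 1), |P({u(X)} < z) − z| ≤ 2m. -/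
/-!
Pushing `X` forward along `u` gives `u(X)` the density `g = (f / u') ∘ u⁻¹` on `u(I)`, which is
again unimodal with maximum at most `m`; so it suffices to treat `u = id`. Then
`P({Y} < z) - z = ∑ₖ Dₖ` with `Dₖ = ∫_k^{k+z} g - z ∫_k^{k+1} g`. On a period where `g` is
monotone, comparing `g` with its values at `k`, `k + z`, `k + 1` squeezes `Dₖ` between `0` and
`z (1 - z) (g k - g (k + 1))`. Hence the defects on each side of the mode have a constant sign
and telescope to at most `z (1 - z) m`, while the period containing the mode contributes at most
`z m`.
-/

open MeasureTheory Set Function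
open scoped ENNReal

theorem tsum_le_add_of_telescoping {d h : ℤ → ℝ} {k₀ : ℤ} {M : ℝ} (hd : Summable d)
    (hlt : ∀ k < k₀, d k ≤ 0) (hgt_nonneg : ∀ k, k₀ < k → 0 ≤ d k)
    (hgt : ∀ k, k₀ < k → d k ≤ h k - h (k + 1)) (hh0 : ∀ k, 0 ≤ h k) (hhM : ∀ k, h k ≤ M) :
    ∑' k, d k ≤ d k₀ + M := by
  rw [← (Equiv.addRight k₀).tsum_eq]
  have hd' : Summable fun k => d (k + k₀) := (Equiv.addRight k₀).summable_iff.2 hd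
  have hpos : ∑' n : ℕ, d (n + 1 + k₀) ≤ M := by
    refine Real.tsum_le_of_sum_range_le (fun n => hgt_nonneg _ (by omega)) fun n => ?_
    calc ∑ i ∈ Finset.range n, d (i + 1 + k₀)
        ≤ ∑ i ∈ Finset.range n, (h (i + 1 + k₀) - h ((i + 1 : ℕ) + 1 + k₀)) :=
          Finset.sum_le_sum fun i _ => by
            rw [show ((i + 1 : ℕ) : ℤ) + 1 + k₀ = i + 1 + k₀ + 1 by push_cast; ring]
            exact hgt _ (by omega)
      _ = h (1 + k₀) - h (n + 1 + k₀) := by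
          rw [Finset.sum_range_sub' (fun i : ℕ => h (i + 1 + k₀))]; simp
      _ ≤ M := by linarith [hhM (1 + k₀), hh0 (n + 1 + k₀)]
  have hneg : ∑' n : ℕ, d (-(n + 1) + k₀) ≤ 0 := tsum_nonpos fun n => hlt _ (by omega)
  have h1 : Summable fun n : ℕ => d (n + 1 + k₀) :=
    hd'.comp_injective (i := fun n : ℕ => (n : ℤ) + 1) fun i j hij => by simpa using hij
  have h2 : Summable fun n : ℕ => d (-(n + 1) + k₀) :=
    hd'.comp_injective (i := fun n : ℕ => -((n : ℤ) + 1)) fun i j hij => by simpa using hij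
  simp only [Equiv.coe_addRight]
  rw [tsum_of_add_one_of_neg_add_one (f := fun k => d (k + k₀)) h1 h2, zero_add]
  linarith

theorem MonotoneOn.intervalIntegral_mem_Icc {g : ℝ → ℝ} {a b : ℝ} (hab : a ≤ b)
    (hg : MonotoneOn g (Icc a b)) :
    ∫ t in a..b, g t ∈ Icc ((b - a) * g a) ((b - a) * g b) := by
  have hint : IntervalIntegrable g volume a b := (uIcc_of_le hab ▸ hg).intervalIntegrable
  have hconst : ∀ c : ℝ, ∫ _ in a..b, c = (b - a) * c := fun c => by simp
  refine ⟨?_, ?_⟩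
  · rw [← hconst]
    exact intervalIntegral.integral_mono_on hab intervalIntegrable_const hint
      fun t ht => hg (left_mem_Icc.2 hab) ht ht.1
  · rw [← hconst]
    exact intervalIntegral.integral_mono_on hab hint intervalIntegrable_const
      fun t ht => hg ht (right_mem_Icc.2 hab) ht.2

noncomputable def periodDefect (g : ℝ → ℝ) (z p : ℝ) : ℝ :=
  (∫ t in p..p + z, g t) - z * ∫ t in p..p + 1, g t

theorem periodDefect_neg (g : ℝ → ℝ) (z p : ℝ) :
    periodDefect (fun t => -g t) z p = -periodDefect g z p := by
  simp only [periodDefect, intervalIntegral.integral_neg]; ring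

theorem MonotoneOn.periodDefect_mem_Icc {g : ℝ → ℝ} {z p : ℝ} (hz0 : 0 ≤ z) (hz1 : z ≤ 1)
    (hg : MonotoneOn g (Icc p (p + 1))) :
    periodDefect g z p ∈ Icc (z * (1 - z) * (g p - g (p + 1))) 0 := by
  have hle₁ : p ≤ p + z := by linarith
  have hle₂ : p + z ≤ p + 1 := by linarith
  have hg₁ : MonotoneOn g (Icc p (p + z)) := hg.mono (Icc_subset_Icc_right hle₂)
  have hg₂ : MonotoneOn g (Icc (p + z) (p + 1)) := hg.mono (Icc_subset_Icc_left hle₁)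
  have hsplit : ∫ t in p..p + 1, g t = (∫ t in p..p + z, g t) + ∫ t in p + z..p + 1, g t :=
    (intervalIntegral.integral_add_adjacent_intervals (uIcc_of_le hle₁ ▸ hg₁).intervalIntegrable
      (uIcc_of_le hle₂ ▸ hg₂).intervalIntegrable).symm
  have hleft := hg₁.intervalIntegral_mem_Icc hle₁
  have hright := hg₂.intervalIntegral_mem_Icc hle₂
  simp only [periodDefect, hsplit]
  simp only [add_sub_cancel_left, show p + 1 - (p + z) = 1 - z by ring] at hleft hright
  obtain ⟨hl₁, hl₂⟩ := hleft
  obtain ⟨hr₁, hr₂⟩ := hright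
  constructor
  · nlinarith [mul_le_mul_of_nonneg_left hl₁ (by linarith : 0 ≤ 1 - z),
      mul_le_mul_of_nonneg_left hr₂ hz0]
  · nlinarith [mul_le_mul_of_nonneg_left hl₂ (by linarith : 0 ≤ 1 - z),
      mul_le_mul_of_nonneg_left hr₁ hz0]

theorem AntitoneOn.periodDefect_mem_Icc {g : ℝ → ℝ} {z p : ℝ} (hz0 : 0 ≤ z) (hz1 : z ≤ 1)
    (hg : AntitoneOn g (Icc p (p + 1))) :
    periodDefect g z p ∈ Icc 0 (z * (1 - z) * (g p - g (p + 1))) := by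
  have := hg.neg.periodDefect_mem_Icc hz0 hz1
  simp only [periodDefect_neg] at this
  constructor <;> linarith [this.1, this.2]

theorem measurable_of_monotoneOn_Iic_of_antitoneOn_Ici {g : ℝ → ℝ} {β : ℝ}
    (hmono : MonotoneOn g (Iic β)) (hanti : AntitoneOn g (Ici β)) : Measurable g := by
  have hmin : Monotone fun t => g (min t β) := fun s t hst =>
    hmono (mem_Iic.2 (min_le_right _ _)) (mem_Iic.2 (min_le_right _ _)) (min_le_min_right β hst)
  have hmax : Antitone fun t => g (max t β) := fun s t hst =>
    hanti (mem_Ici.2 (le_max_right _ _)) (mem_Ici.2 (le_max_right _ _)) (max_le_max_right β hst)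
  have hpiece : (Iic β).piecewise (fun t => g (min t β)) (fun t => g (max t β)) = g := by
    ext t
    by_cases ht : t ≤ β
    · simp [ht]
    · simp [ht, le_of_lt (not_le.1 ht)]
  exact hpiece ▸ hmin.measurable.piecewise measurableSet_Iic hmax.measurable

theorem Measurable.intervalIntegrable_of_norm_le {g : ℝ → ℝ} {C : ℝ} (hg : Measurable g)
    (hC : ∀ t, ‖g t‖ ≤ C) (a b : ℝ) :
    IntervalIntegrable g volume a b :=
  (intervalIntegrable_const (c := C)).mono_fun hg.aestronglyMeasurable
    (ae_of_all _ fun t => (hC t).trans (le_abs_self C))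

theorem measure_fract_lt (ν : Measure ℝ) {w : ℝ} (hw : w ≤ 1) :
    ν {t | Int.fract t < w} = ∑' k : ℤ, ν (Ico (k : ℝ) (k + w)) := by
  have hunion : {t : ℝ | Int.fract t < w} = ⋃ k : ℤ, Ico (k : ℝ) (k + w) := by
    ext t
    simp only [mem_ofPred_eq, mem_iUnion, mem_Ico, Int.fract]
    constructor
    · exact fun ht => ⟨⌊t⌋, Int.floor_le t, by linarith⟩
    · rintro ⟨k, hk, hkw⟩
      rw [(Int.floor_eq_iff.2 ⟨hk, by linarith⟩ : ⌊t⌋ = k)]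
      linarith
  rw [hunion, measure_iUnion _ fun _ => measurableSet_Ico]
  exact (pairwise_disjoint_Ico_intCast ℝ).mono fun i j h =>
    h.mono (Ico_subset_Ico_right (by linarith)) (Ico_subset_Ico_right (by linarith))

theorem withDensity_ofReal_Ico {g : ℝ → ℝ} (hg0 : ∀ t, 0 ≤ g t) {p q : ℝ} (hpq : p ≤ q)
    (hint : IntervalIntegrable g volume p q) :
    volume.withDensity (fun t => ENNReal.ofReal (g t)) (Ico p q)
      = ENNReal.ofReal (∫ t in p..q, g t) := by
  rw [withDensity_apply _ measurableSet_Ico, intervalIntegral.integral_of_le hpq,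
    ← integral_Ico_eq_integral_Ioc, ofReal_integral_eq_lintegral_ofReal _ (ae_of_all _ hg0)]
  exact (intervalIntegrable_iff_integrableOn_Ico_of_le hpq).1 hint

theorem abs_periodDefect_le {g : ℝ → ℝ} {m z : ℝ}
    (hint : ∀ a b, IntervalIntegrable g volume a b) (hg0 : ∀ t, 0 ≤ g t)
    (hgm : ∀ t, g t ≤ m) (hz0 : 0 ≤ z) (p : ℝ) : |periodDefect g z p| ≤ z * m := by
  have hmass : ∀ w, 0 ≤ w → 0 ≤ ∫ t in p..p + w, g t ∧ ∫ t in p..p + w, g t ≤ w * m := by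
    intro w hw
    refine ⟨intervalIntegral.integral_nonneg (by linarith) fun t _ => hg0 t, ?_⟩
    calc ∫ t in p..p + w, g t ≤ ∫ _ in p..p + w, m :=
          intervalIntegral.integral_mono_on (by linarith) (hint _ _) intervalIntegrable_const
            fun t _ => hgm t
      _ = w * m := by simp
  obtain ⟨hb0, hbm⟩ := hmass z hz0
  obtain ⟨hc0, hcm⟩ := hmass 1 zero_le_one
  rw [periodDefect, abs_le]
  constructor <;> nlinarith

theorem Icc_subset_Iic_of_lt_floor {β : ℝ} {k : ℤ} (hk : k < ⌊β⌋) :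
    Icc (k : ℝ) (k + 1) ⊆ Iic β := fun _ ht => by
  have : ((k + 1 : ℤ) : ℝ) ≤ ⌊β⌋ := by exact_mod_cast hk
  push_cast at this
  exact mem_Iic.2 (by linarith [ht.2, Int.floor_le β])

theorem Icc_subset_Ici_of_floor_lt {β : ℝ} {k : ℤ} (hk : ⌊β⌋ < k) :
    Icc (k : ℝ) (k + 1) ⊆ Ici β := fun _ ht => by
  have : ((⌊β⌋ + 1 : ℤ) : ℝ) ≤ k := by exact_mod_cast hk
  push_cast at this
  exact mem_Ici.2 (by linarith [ht.1, Int.lt_floor_add_one β])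

theorem abs_tsum_periodDefect_le {g : ℝ → ℝ} {m β z : ℝ} (hg0 : ∀ t, 0 ≤ g t)
    (hgm : ∀ t, g t ≤ m) (hmono : MonotoneOn g (Iic β)) (hanti : AntitoneOn g (Ici β))
    (hint : ∀ a b, IntervalIntegrable g volume a b) (hz0 : 0 ≤ z) (hz1 : z ≤ 1)
    (hsum : Summable fun k : ℤ => periodDefect g z k) :
    |∑' k : ℤ, periodDefect g z k| ≤ 2 * m := by
  set k₀ := ⌊β⌋
  have hmono_k : ∀ k : ℤ, k < k₀ → MonotoneOn g (Icc (k : ℝ) (k + 1)) := fun k hk =>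
    hmono.mono (Icc_subset_Iic_of_lt_floor hk)
  have hanti_k : ∀ k : ℤ, k₀ < k → AntitoneOn g (Icc (k : ℝ) (k + 1)) := fun k hk =>
    hanti.mono (Icc_subset_Ici_of_floor_lt hk)
  have hm : 0 ≤ m := (hg0 0).trans (hgm 0)
  have hzz : 0 ≤ z * (1 - z) := mul_nonneg hz0 (by linarith)
  have hupper : ∑' k : ℤ, periodDefect g z k ≤ periodDefect g z k₀ + z * (1 - z) * m := by
    refine tsum_le_add_of_telescoping (h := fun k : ℤ => z * (1 - z) * g k) hsum
      (fun k hk => ((hmono_k k hk).periodDefect_mem_Icc hz0 hz1).2)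
      (fun k hk => ((hanti_k k hk).periodDefect_mem_Icc hz0 hz1).1)
      (fun k hk => ?_) (fun k => mul_nonneg hzz (hg0 _))
      (fun k => mul_le_mul_of_nonneg_left (hgm _) hzz)
    have := ((hanti_k k hk).periodDefect_mem_Icc hz0 hz1).2
    push_cast
    linarith
  -- the lower bound is the upper bound for the reflected sequence `j ↦ -D (-j)`
  have hlower : -∑' k : ℤ, periodDefect g z k ≤ -periodDefect g z k₀ + z * (1 - z) * m := by
    have hrefl : ∑' j : ℤ, -periodDefect g z ((-j : ℤ) : ℝ) = -∑' k : ℤ, periodDefect g z k := by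
      rw [tsum_neg, ← (Equiv.neg ℤ).tsum_eq]
      simp only [Equiv.neg_apply, neg_neg]
    rw [← hrefl, ← neg_neg k₀]
    refine tsum_le_add_of_telescoping (h := fun j : ℤ => z * (1 - z) * g ((-j : ℤ) + 1))
      (hsum.comp_injective neg_injective).neg
      (fun j hj => ?_) (fun j hj => ?_) (fun j hj => ?_) (fun j => mul_nonneg hzz (hg0 _))
      (fun j => mul_le_mul_of_nonneg_left (hgm _) hzz)
    · linarith [((hanti_k (-j) (by omega)).periodDefect_mem_Icc hz0 hz1).1]
    · linarith [((hmono_k (-j) (by omega)).periodDefect_mem_Icc hz0 hz1).2]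
    · have := ((hmono_k (-j) (by omega)).periodDefect_mem_Icc hz0 hz1).1
      push_cast at this ⊢
      rw [show -((j : ℝ) + 1) + 1 = -j by ring]
      linarith
  have hk₀ := abs_le.1 (abs_periodDefect_le hint hg0 hgm hz0 k₀)
  rw [abs_le]
  constructor <;> nlinarith

theorem abs_withDensity_fract_lt_sub_le {g : ℝ → ℝ} {m β z : ℝ} (hg0 : ∀ t, 0 ≤ g t)
    (hgm : ∀ t, g t ≤ m) (hmono : MonotoneOn g (Iic β)) (hanti : AntitoneOn g (Ici β))
    [IsProbabilityMeasure (volume.withDensity fun t => ENNReal.ofReal (g t))]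
    (hz0 : 0 ≤ z) (hz1 : z ≤ 1) :
    |(volume.withDensity (fun t => ENNReal.ofReal (g t)) {t | Int.fract t < z}).toReal - z|
      ≤ 2 * m := by
  set ν := volume.withDensity fun t => ENNReal.ofReal (g t)
  have hint : ∀ a b, IntervalIntegrable g volume a b :=
    (measurable_of_monotoneOn_Iic_of_antitoneOn_Ici hmono hanti).intervalIntegrable_of_norm_le
      fun t => (Real.norm_of_nonneg (hg0 t)).trans_le (hgm t)
  have hmass : ∀ w, 0 ≤ w → w ≤ 1 →
      HasSum (fun k : ℤ => ∫ t in k..k + w, g t) (ν {t | Int.fract t < w}).toReal := by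
    intro w hw0 hw1
    have hIco : ∀ k : ℤ, ν (Ico (k : ℝ) (k + w)) = ENNReal.ofReal (∫ t in k..k + w, g t) :=
      fun k => withDensity_ofReal_Ico hg0 (by linarith) (hint _ _)
    rw [measure_fract_lt ν hw1]
    have hne : ∑' k : ℤ, ν (Ico (k : ℝ) (k + w)) ≠ ∞ :=
      measure_fract_lt ν hw1 ▸ measure_ne_top ν _
    rw [ENNReal.tsum_toReal_eq fun k => hIco k ▸ ENNReal.ofReal_ne_top]
    convert (ENNReal.summable_toReal hne).hasSum using 1
    ext k
    rw [hIco, ENNReal.toReal_ofReal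
      (intervalIntegral.integral_nonneg (by linarith) fun t _ => hg0 t)]
  have hone : {t : ℝ | Int.fract t < 1} = univ := eq_univ_of_forall fun t => Int.fract_lt_one t
  have hdefect := (hmass z hz0 hz1).sub ((hmass 1 zero_le_one le_rfl).mul_left z)
  rw [hone, measure_univ, ENNReal.toReal_one, mul_one] at hdefect
  rw [← hdefect.tsum_eq]
  exact abs_tsum_periodDefect_le hg0 hgm hmono hanti hint hz0 hz1 hdefect.summable

theorem StrictMonoOn.monotoneOn_indicator_comp_invFunOn {α β γ : Type*} [LinearOrder α]
    [Nonempty α] [LinearOrder β] [Preorder γ] [Zero γ] {u : α → β} {I : Set α}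
    (hu : StrictMonoOn u I) (hJ : (u '' I).OrdConnected) {a : α} (ha : a ∈ I) {φ : α → γ}
    (hφ0 : ∀ x ∈ I, 0 ≤ φ x) (hφ : MonotoneOn φ (I ∩ Iic a)) :
    MonotoneOn ((u '' I).indicator (φ ∘ invFunOn u I)) (Iic (u a)) := by
  intro s hs t ht hst
  have hv : ∀ r ∈ u '' I, invFunOn u I r ∈ I ∧ u (invFunOn u I r) = r := fun r hr =>
    ⟨invFunOn_mem hr, invFunOn_eq hr⟩
  by_cases htJ : t ∈ u '' I
  · obtain ⟨htI, hut⟩ := hv t htJ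
    have hta : invFunOn u I t ≤ a := (hu.le_iff_le htI ha).1 (by rwa [hut])
    by_cases hsJ : s ∈ u '' I
    · obtain ⟨hsI, hus⟩ := hv s hsJ
      have hle : invFunOn u I s ≤ invFunOn u I t := (hu.le_iff_le hsI htI).1 (by rwa [hus, hut])
      rw [indicator_of_mem hsJ, indicator_of_mem htJ]
      exact hφ ⟨hsI, hle.trans hta⟩ ⟨htI, hta⟩ hle
    · rw [indicator_of_notMem hsJ, indicator_of_mem htJ]
      exact hφ0 _ htI
  · have hsJ : s ∉ u '' I := fun hsJ => htJ (hJ.out hsJ ⟨a, ha, rfl⟩ ⟨hst, ht⟩)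
    rw [indicator_of_notMem hsJ, indicator_of_notMem htJ]

theorem StrictMonoOn.antitoneOn_indicator_comp_invFunOn {α β γ : Type*} [LinearOrder α]
    [Nonempty α] [LinearOrder β] [Preorder γ] [Zero γ] {u : α → β} {I : Set α}
    (hu : StrictMonoOn u I) (hJ : (u '' I).OrdConnected) {a : α} (ha : a ∈ I) {φ : α → γ}
    (hφ0 : ∀ x ∈ I, 0 ≤ φ x) (hφ : AntitoneOn φ (I ∩ Ici a)) :
    AntitoneOn ((u '' I).indicator (φ ∘ invFunOn u I)) (Ici (u a)) := fun _ hs _ ht hst =>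
  StrictMonoOn.monotoneOn_indicator_comp_invFunOn (α := αᵒᵈ) (β := βᵒᵈ) (u := u)
    (fun _ hx _ hy hxy => hu hy hx hxy) hJ.dual ha hφ0 (fun _ hx _ hy hxy => hφ hy hx hxy)
    ht hs hst

theorem ContinuousOn.measurableSet_preimage_inter {α : Type*} [TopologicalSpace α]
    [MeasurableSpace α] [OpensMeasurableSpace α] {f : α → ℝ} {s : Set α} {T : Set ℝ}
    (hf : ContinuousOn f s) (hs : MeasurableSet s) (hT : MeasurableSet T) :
    MeasurableSet (f ⁻¹' T ∩ s) := by
  classical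
  have hm : Measurable (s.piecewise f 0) := hf.measurable_piecewise continuousOn_const hs
  convert (hm hT).inter hs using 1
  ext x
  by_cases hx : x ∈ s <;> simp [hx]

theorem withDensity_ofReal_compl_eq_zero {α : Type*} [MeasurableSpace α] {μ : Measure α}
    {f : α → ℝ} {s : Set α}
    (hs : MeasurableSet s) (hf : ∀ x ∉ s, f x = 0) :
    μ.withDensity (fun x => ENNReal.ofReal (f x)) sᶜ = 0 := by
  rw [withDensity_apply _ hs.compl, setLIntegral_congr_fun hs.compl fun x hx => by
    rw [hf x hx, ENNReal.ofReal_zero], lintegral_zero]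

theorem withDensity_preimage_eq_withDensity {I : Set ℝ} (hI : MeasurableSet I)
    {f u u' G : ℝ → ℝ} (hsupp : ∀ x ∉ I, f x = 0) (hderiv : ∀ x ∈ I, HasDerivAt u (u' x) x)
    (hu'pos : ∀ x ∈ I, 0 < u' x) (hinj : InjOn u I) (hG : ∀ x ∈ I, G (u x) = f x / u' x)
    (hGsupp : ∀ t ∉ u '' I, G t = 0) {T : Set ℝ} (hT : MeasurableSet T) :
    volume.withDensity (fun x => ENNReal.ofReal (f x)) (u ⁻¹' T)
      = volume.withDensity (fun t => ENNReal.ofReal (G t)) T := by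
  have hcont : ContinuousOn u I := fun x hx => (hderiv x hx).continuousAt.continuousWithinAt
  have hs : MeasurableSet (u ⁻¹' T ∩ I) := hcont.measurableSet_preimage_inter hI hT
  have hJ : MeasurableSet (u '' I) := hI.image_of_continuousOn_injOn hcont hinj
  calc volume.withDensity (fun x => ENNReal.ofReal (f x)) (u ⁻¹' T)
      = volume.withDensity (fun x => ENNReal.ofReal (f x)) (u ⁻¹' T ∩ I) :=
        (measure_inter_conull (withDensity_ofReal_compl_eq_zero hI hsupp)).symm
    _ = ∫⁻ x in u ⁻¹' T ∩ I, ENNReal.ofReal |u' x| * ENNReal.ofReal (G (u x)) := by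
        rw [withDensity_apply _ hs]
        refine setLIntegral_congr_fun hs fun x hx => ?_
        have hpos := hu'pos x hx.2
        rw [hG x hx.2, abs_of_pos hpos, ← ENNReal.ofReal_mul hpos.le,
          mul_div_cancel₀ _ hpos.ne']
    _ = ∫⁻ t in u '' (u ⁻¹' T ∩ I), ENNReal.ofReal (G t) :=
        (lintegral_image_eq_lintegral_abs_deriv_mul hs
          (fun x hx => (hderiv x hx.2).hasDerivWithinAt) (hinj.mono inter_subset_right)
          fun t => ENNReal.ofReal (G t)).symm
    _ = volume.withDensity (fun t => ENNReal.ofReal (G t)) (T ∩ u '' I) := by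
        rw [image_preimage_inter, withDensity_apply _ (hT.inter hJ)]
    _ = volume.withDensity (fun t => ENNReal.ofReal (G t)) T :=
        measure_inter_conull (withDensity_ofReal_compl_eq_zero hJ hGsupp)

theorem u_benford_of_scatter_regularity_general
    (μ : Measure ℝ) [IsProbabilityMeasure μ]
    (I : Set ℝ) (hI : I.OrdConnected)
    (f : ℝ → ℝ) (hf0 : ∀ x, 0 ≤ f x) (hsupp : ∀ x ∉ I, f x = 0)
    (hμ : μ = volume.withDensity (fun x => ENNReal.ofReal (f x)))
    (u u' : ℝ → ℝ)
    (hderiv : ∀ x ∈ I, HasDerivAt u (u' x) x)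
    (hu'pos : ∀ x ∈ I, 0 < u' x)
    (huincr : StrictMonoOn u I)
    (a m : ℝ) (haI : a ∈ I)
    (hmax : ∀ x ∈ I, f x / u' x ≤ m)
    (hmono : MonotoneOn (fun x => f x / u' x) (I ∩ Iic a))
    (hanti : AntitoneOn (fun x => f x / u' x) (I ∩ Ici a)) :
    ∀ z ∈ Ico (0 : ℝ) 1,
      |(μ {x : ℝ | Int.fract (u x) < z}).toReal - z| ≤ 2 * m := by
  rintro z ⟨hz0, hz1⟩
  set g := (u '' I).indicator ((fun x => f x / u' x) ∘ invFunOn u I)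
  have hφ0 : ∀ x ∈ I, 0 ≤ f x / u' x := fun x hx => div_nonneg (hf0 x) (hu'pos x hx).le
  have hJ : (u '' I).OrdConnected := (hI.isPreconnected.image u fun x hx =>
    (hderiv x hx).continuousAt.continuousWithinAt).ordConnected
  have hpush : ∀ T, MeasurableSet T →
      μ (u ⁻¹' T) = volume.withDensity (fun t => ENNReal.ofReal (g t)) T := fun T hT =>
    hμ ▸ withDensity_preimage_eq_withDensity hI.measurableSet hsupp hderiv hu'pos huincr.injOn
      (fun x hx => by rw [indicator_of_mem (mem_image_of_mem u hx), comp_apply,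
        huincr.injOn.leftInvOn_invFunOn hx])
      (fun t ht => indicator_of_notMem ht _) hT
  have : IsProbabilityMeasure (volume.withDensity fun t => ENNReal.ofReal (g t)) :=
    ⟨by rw [← hpush univ MeasurableSet.univ, preimage_univ, measure_univ]⟩
  have hg0 : ∀ t, 0 ≤ g t := indicator_nonneg fun t ht => hφ0 _ (invFunOn_mem ht)
  have hgm : ∀ t, g t ≤ m := indicator_le' (fun t ht => hmax _ (invFunOn_mem ht))
    fun _ _ => (hφ0 a haI).trans (hmax a haI)
  rw [show {x | Int.fract (u x) < z} = u ⁻¹' {t | Int.fract t < z} from rfl,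
    hpush _ (measurableSet_lt measurable_fract measurable_const)]
  exact abs_withDensity_fract_lt_sub_le hg0 hgm
    (huincr.monotoneOn_indicator_comp_invFunOn hJ haI hφ0 hmono)
    (huincr.antitoneOn_indicator_comp_invFunOn hJ haI hφ0 hanti) hz0 hz1.le

/-- Theorem 2 (generalized Benford): if `X` has density `f` supported on an
interval `I`, and `u : I → ℝ` is a `C¹` increasing function (with derivative
`u' > 0` on `I`) such that `f/u'` attains its maximum `m` at some `a ∈ I`,
is nondecreasing before `a` and nonincreasing after `a` on `I`, then
`|P({u(X)} < z) − z| ≤ 2m` for all `z ∈ [0,1)`. -/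
theorem u_benford_of_scatter_regularity
    (μ : Measure ℝ) [IsProbabilityMeasure μ]
    (I : Set ℝ) (hI : I.OrdConnected)
    (f : ℝ → ℝ) (hf0 : ∀ x, 0 ≤ f x) (hsupp : ∀ x ∉ I, f x = 0)
    (hμ : μ = volume.withDensity (fun x => ENNReal.ofReal (f x)))
    (u u' : ℝ → ℝ)
    (hderiv : ∀ x ∈ I, HasDerivAt u (u' x) x)
    (hu'cont : ContinuousOn u' I) (hu'pos : ∀ x ∈ I, 0 < u' x)
    (huincr : StrictMonoOn u I)
    (a m : ℝ) (haI : a ∈ I) (hm : m = f a / u' a)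
    (hmax : ∀ x ∈ I, f x / u' x ≤ m)
    (hmono : MonotoneOn (fun x => f x / u' x) (I ∩ Iic a))
    (hanti : AntitoneOn (fun x => f x / u' x) (I ∩ Ici a)) :
    ∀ z ∈ Ico (0 : ℝ) 1,
      |(μ {x : ℝ | Int.fract (u x) < z}).toReal - z| ≤ 2 * m :=
  u_benford_of_scatter_regularity_general μ I hI f hf0 hsupp hμ u u' hderiv hu'pos huincr a m haI
    hmax hmono hanti
end

section
/- Let X_b be a type II Pareto random variable with density f_b(x) = b/(1+x)^(b+1) on [0, ∞). As b → 0⁺, {log₁₀ X_b} converges in law to the uniform distribution on [0, 1); i.e., for every z ∈ (0,1], P({log₁₀ X_b} < z) → z as b → 0⁺. -/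
open MeasureTheory Set Filter

/-! `Y_b = log_B X_b` has distribution function `F_b t = 1 - (1 + B ^ t) ^ (-b)`, so the
probability of `{Y_b} < z` is `∑ n : ℤ, (F_b (n + z) - F_b n)`. By the mean value theorem, the
mass of `[n, n + z]` differs from `z` times the mass of `[n, n + 1]` by at most `z` times the
oscillation of the density `F_b'` on `[n, n + 1]`. That density is unimodal and bounded by
`b log B`, so the oscillations telescope on either side of the peak, and the probability is within
`3 b log B` of `z`. -/

lemma exists_hasSum_le_of_le_sub_succ {f s : ℕ → ℝ} (hf : ∀ k, 0 ≤ f k)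
    (hfs : ∀ k, f k ≤ s k - s (k + 1)) (hs : ∀ k, 0 ≤ s k) : ∃ a ≤ s 0, HasSum f a := by
  have hsum : ∀ K, ∑ k ∈ Finset.range K, f k ≤ s 0 := fun K =>
    (Finset.sum_le_sum fun k _ => hfs k).trans (by rw [Finset.sum_range_sub']; linarith [hs K])
  exact ⟨_, Real.tsum_le_of_sum_range_le hf hsum, (summable_of_sum_range_le hf hsum).hasSum⟩

lemma hasSum_sub_of_monotone_of_tendsto {g : ℕ → ℝ} {B : ℝ} (hg : Monotone g)
    (hlim : Tendsto g atTop (nhds B)) : HasSum (fun k => g (k + 1) - g k) (B - g 0) := by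
  rw [hasSum_iff_tendsto_nat_of_nonneg fun k => sub_nonneg.2 (hg k.le_succ)]
  simpa only [Finset.sum_range_sub] using hlim.sub_const (g 0)

lemma hasSum_int_sub_of_monotone {F : ℝ → ℝ} {A B : ℝ} (hF : Monotone F)
    (hbot : Tendsto F atBot (nhds A)) (htop : Tendsto F atTop (nhds B)) :
    HasSum (fun n : ℤ => F (n + 1) - F n) (B - A) := by
  have hpos := hasSum_sub_of_monotone_of_tendsto (g := fun k : ℕ => F k)
    (fun j k hjk => hF (Nat.cast_le.2 hjk)) (htop.comp tendsto_natCast_atTop_atTop)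
  have hneg := hasSum_sub_of_monotone_of_tendsto (g := fun k : ℕ => -F (-k))
    (fun j k hjk => neg_le_neg (hF (neg_le_neg (Nat.cast_le.2 hjk))))
    ((hbot.comp (tendsto_neg_atTop_atBot.comp tendsto_natCast_atTop_atTop)).neg)
  have := HasSum.of_nat_of_neg_add_one (f := fun n : ℤ => F (n + 1) - F n)
    (by simpa using hpos) (by convert hneg using 2 with k; push_cast; ring_nf)
  convert this using 1
  simp only [Nat.cast_zero, neg_zero]
  ring

noncomputable def uniformDefect (F : ℝ → ℝ) (z t : ℝ) : ℝ :=
  (F (t + z) - F t) - z * (F (t + 1) - F t)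

section UniformDefect

variable {F r : ℝ → ℝ} {z : ℝ}

lemma abs_uniformDefect_le (hF : ∀ t, HasDerivAt F (r t) t) (hz : 0 < z) (hz1 : z ≤ 1)
    {t m m' : ℝ} (hr : ∀ s ∈ Icc t (t + 1), r s ∈ Icc m m') :
    |uniformDefect F z t| ≤ z * (m' - m) := by
  have hFc : Continuous F := continuous_iff_continuousAt.2 fun s => (hF s).continuousAt
  obtain ⟨c, hc, hcz⟩ := exists_hasDerivAt_eq_slope F r (by linarith : t < t + z)
    hFc.continuousOn fun s _ => hF s
  obtain ⟨c', hc', hc'1⟩ := exists_hasDerivAt_eq_slope F r (by linarith : t < t + 1)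
    hFc.continuousOn fun s _ => hF s
  rw [add_sub_cancel_left] at hcz hc'1
  rw [div_one] at hc'1
  have hrc := hr c ⟨hc.1.le, by linarith [hc.2]⟩
  have hrc' := hr c' ⟨hc'.1.le, hc'.2.le⟩
  rw [uniformDefect, ← hc'1, show F (t + z) - F t = z * r c by rw [hcz]; field_simp, ← mul_sub,
    abs_mul, abs_of_pos hz]
  exact mul_le_mul_of_nonneg_left (abs_sub_le_of_le_of_le hrc.1 hrc.2 hrc'.1 hrc'.2) hz.le

lemma exists_hasSum_abs_uniformDefect_le_of_antitoneOn (hF : ∀ t, HasDerivAt F (r t) t)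
    (hr0 : ∀ t, 0 ≤ r t) (hanti : AntitoneOn r (Ici 1)) (hz : 0 < z) (hz1 : z ≤ 1) :
    ∃ a ≤ z * r 1, HasSum (fun k : ℕ => |uniformDefect F z (k + 1)|) a := by
  have hstep (k : ℕ) :
      |uniformDefect F z (k + 1)| ≤ z * r (k + 1) - z * r (↑(k + 1) + 1) := by
    have hk := k.cast_nonneg (α := ℝ)
    have := abs_uniformDefect_le hF hz hz1 (t := k + 1) (m := r (k + 1 + 1)) (m' := r (k + 1))
      fun s hs =>
        ⟨hanti (by simp only [mem_Ici]; linarith [hs.1]) (by simp only [mem_Ici]; linarith) hs.2,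
         hanti (by simp only [mem_Ici]; linarith) (by simp only [mem_Ici]; linarith [hs.1]) hs.1⟩
    push_cast
    linarith
  simpa using exists_hasSum_le_of_le_sub_succ (fun k => abs_nonneg _) hstep
    (fun k => mul_nonneg hz.le (hr0 _))

lemma exists_hasSum_abs_uniformDefect_le_of_monotoneOn (hF : ∀ t, HasDerivAt F (r t) t)
    (hr0 : ∀ t, 0 ≤ r t) (hmono : MonotoneOn r (Iic 0)) (hz : 0 < z) (hz1 : z ≤ 1) :
    ∃ a ≤ z * r 0, HasSum (fun k : ℕ => |uniformDefect F z (-(k + 1))|) a := by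
  have hstep (k : ℕ) : |uniformDefect F z (-(k + 1))| ≤ z * r (-k) - z * r (-↑(k + 1)) := by
    have hk := k.cast_nonneg (α := ℝ)
    have := abs_uniformDefect_le hF hz hz1 (t := -(k + 1)) (m := r (-(k + 1))) (m' := r (-k))
      fun s hs =>
        ⟨hmono (by simp only [mem_Iic]; linarith) (by simp only [mem_Iic]; linarith [hs.2]) hs.1,
         hmono (by simp only [mem_Iic]; linarith [hs.2]) (by simp only [mem_Iic]; linarith)
          (by linarith [hs.2])⟩
    push_cast
    linarith
  simpa using exists_hasSum_le_of_le_sub_succ (fun k => abs_nonneg _) hstep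
    (fun k => mul_nonneg hz.le (hr0 _))

theorem summable_and_abs_tsum_sub_le_of_peak_mem_Icc_zero_one {M : ℝ}
    (hF : ∀ t, HasDerivAt F (r t) t) (hr0 : ∀ t, 0 ≤ r t) (hrM : ∀ t, r t ≤ M)
    (hmono : MonotoneOn r (Iic 0)) (hanti : AntitoneOn r (Ici 1))
    (hbot : Tendsto F atBot (nhds 0)) (htop : Tendsto F atTop (nhds 1)) (hz : 0 < z)
    (hz1 : z ≤ 1) :
    Summable (fun n : ℤ => F (n + z) - F n) ∧
      |∑' n : ℤ, (F (n + z) - F n) - z| ≤ 3 * M := by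
  set e : ℤ → ℝ := fun n => uniformDefect F z n with he
  obtain ⟨A, hA, hsumA⟩ := exists_hasSum_abs_uniformDefect_le_of_antitoneOn hF hr0 hanti hz hz1
  obtain ⟨A', hA', hsumA'⟩ :=
    exists_hasSum_abs_uniformDefect_le_of_monotoneOn hF hr0 hmono hz hz1
  have hzero : |e 0| ≤ z * M := by
    simpa [he] using abs_uniformDefect_le hF hz hz1 (t := 0) (m := 0) (m' := M)
      fun s _ => ⟨hr0 s, hrM s⟩
  have habs : HasSum (fun n => |e n|) (|e 0| + A + A') := by
    refine HasSum.of_nat_of_neg_add_one ?_ (by simpa [he] using hsumA')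
    simpa [add_comm] using (hasSum_nat_add_iff' 1).1 (by simpa [he] using hsumA)
  have hsum_e := habs.summable.of_abs.hasSum
  have hd : HasSum (fun n : ℤ => F (n + 1) - F n) 1 := by
    simpa using hasSum_int_sub_of_monotone (monotone_of_hasDerivAt_nonneg hF hr0) hbot htop
  have hsplit : (fun n : ℤ => F (n + z) - F n) = fun n => e n + z * (F (n + 1) - F n) := by
    funext n; simp only [he, uniformDefect]; ring
  have hsum : HasSum (fun n : ℤ => F (n + z) - F n) (∑' n, e n + z * 1) :=
    hsplit ▸ hsum_e.add (hd.mul_left z)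
  have htotal : |e 0| + A + A' ≤ 3 * M := by
    have h1 := mul_le_mul_of_nonneg_left (hrM 1) hz.le
    have h0 := mul_le_mul_of_nonneg_left (hrM 0) hz.le
    have hzM : z * M ≤ M := mul_le_of_le_one_left ((hr0 0).trans (hrM 0)) hz1
    linarith
  refine ⟨hsum.summable, ?_⟩
  rw [hsum.tsum_eq, mul_one, add_sub_cancel_right, abs_le]
  constructor
  · linarith [hasSum_le (fun n => neg_abs_le (e n)) habs.neg hsum_e]
  · linarith [hasSum_le (fun n => le_abs_self (e n)) hsum_e habs]

theorem summable_and_abs_tsum_sub_le_of_unimodal {M c : ℝ}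
    (hF : ∀ t, HasDerivAt F (r t) t) (hr0 : ∀ t, 0 ≤ r t) (hrM : ∀ t, r t ≤ M)
    (hmono : MonotoneOn r (Iic c)) (hanti : AntitoneOn r (Ici c))
    (hbot : Tendsto F atBot (nhds 0)) (htop : Tendsto F atTop (nhds 1)) (hz : 0 < z)
    (hz1 : z ≤ 1) :
    Summable (fun n : ℤ => F (n + z) - F n) ∧
      |∑' n : ℤ, (F (n + z) - F n) - z| ≤ 3 * M := by
  set N := ⌊c⌋
  have hN : (N : ℝ) ≤ c := Int.floor_le c
  have hN1 : c ≤ N + 1 := (Int.lt_floor_add_one c).le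
  obtain ⟨hsum, hle⟩ := summable_and_abs_tsum_sub_le_of_peak_mem_Icc_zero_one
    (F := fun t => F (t + N)) (r := fun t => r (t + N)) (M := M) (z := z)
    (fun t => (hF _).comp_add_const t N) (fun t => hr0 _) (fun t => hrM _)
    (fun s hs t ht hst => hmono (by simp only [mem_Iic] at *; linarith)
      (by simp only [mem_Iic] at *; linarith) (by linarith))
    (fun s hs t ht hst => hanti (by simp only [mem_Ici] at *; linarith)
      (by simp only [mem_Ici] at *; linarith) (by linarith))
    (hbot.comp (tendsto_atBot_add_const_right _ _ tendsto_id))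
    (htop.comp (tendsto_atTop_add_const_right _ _ tendsto_id)) hz hz1
  have hshift (n : ℤ) : F (↑n + z + N) - F (↑n + N) = F (↑(n + N) + z) - F ↑(n + N) := by
    push_cast; ring_nf
  simp only [hshift] at hsum hle
  exact ⟨(Equiv.addRight N).summable_iff.1 hsum,
    (Equiv.addRight N).tsum_eq (fun n : ℤ => F (n + z) - F n) ▸ hle⟩

end UniformDefect

section FractLogb

variable {B x z : ℝ}

lemma mem_Ico_rpow_iff (hB : 1 < B) (hx : 0 < x) (hz1 : z ≤ 1) (n : ℤ) :
    x ∈ Ico (B ^ (n : ℝ)) (B ^ (n + z)) ↔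
      ⌊Real.logb B x⌋ = n ∧ Int.fract (Real.logb B x) < z := by
  rw [mem_Ico, ← Real.le_logb_iff_rpow_le hB hx, ← Real.logb_lt_iff_lt_rpow hB hx]
  constructor
  · rintro ⟨h1, h2⟩
    have hfl : ⌊Real.logb B x⌋ = n := Int.floor_eq_iff.2 ⟨h1, by linarith⟩
    exact ⟨hfl, by rw [Int.fract, hfl]; linarith⟩
  · rintro ⟨hfl, h2⟩
    rw [Int.fract, hfl] at h2
    exact ⟨hfl ▸ Int.floor_le _, by linarith⟩

lemma setOf_fract_logb_lt_inter_Ioi (hB : 1 < B) (hz1 : z ≤ 1) :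
    {x | Int.fract (Real.logb B x) < z} ∩ Ioi 0 =
      ⋃ n : ℤ, Ico (B ^ (n : ℝ)) (B ^ (n + z)) := by
  ext x
  simp only [mem_inter_iff, mem_Ioi, mem_iUnion]
  constructor
  · rintro ⟨hfr, hx⟩
    exact ⟨_, (mem_Ico_rpow_iff hB hx hz1 _).2 ⟨rfl, hfr⟩⟩
  · rintro ⟨n, hn⟩
    have hx : 0 < x := (Real.rpow_pos_of_pos (by linarith) _).trans_le hn.1
    exact ⟨((mem_Ico_rpow_iff hB hx hz1 n).1 hn).2, hx⟩

lemma pairwise_disjoint_Ico_rpow (hB : 1 < B) (hz1 : z ≤ 1) :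
    Pairwise (Function.onFun Disjoint fun n : ℤ => Ico (B ^ (n : ℝ)) (B ^ (n + z))) := by
  refine fun m n hmn => Set.disjoint_left.2 fun x hm hn => hmn ?_
  have hx : 0 < x := (Real.rpow_pos_of_pos (by linarith) _).trans_le hm.1
  rw [← ((mem_Ico_rpow_iff hB hx hz1 m).1 hm).1, ((mem_Ico_rpow_iff hB hx hz1 n).1 hn).1]

end FractLogb

noncomputable def paretoIILogCDF (B b t : ℝ) : ℝ := 1 - (1 + B ^ t) ^ (-b)

noncomputable def paretoIILogPDF (B b t : ℝ) : ℝ :=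
  b * Real.log B * (B ^ t * (1 + B ^ t) ^ (-b - 1))

noncomputable def paretoIIMeasure (b : ℝ) : Measure ℝ :=
  volume.withDensity fun x => ENNReal.ofReal (if 0 ≤ x then b / (1 + x) ^ (b + 1) else 0)

section ParetoII

variable {B b z : ℝ}

lemma hasDerivAt_paretoIILogCDF (hB : 0 < B) (t : ℝ) :
    HasDerivAt (paretoIILogCDF B b) (paretoIILogPDF B b t) t := by
  have hpos : 0 < 1 + B ^ t := by positivity
  refine ((((Real.hasStrictDerivAt_const_rpow hB t).hasDerivAt.const_add 1).rpow_const (p := -b)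
    (Or.inl hpos.ne')).const_sub 1).congr_deriv ?_
  rw [paretoIILogPDF]
  ring

lemma hasDerivAt_paretoIILogPDF (hB : 0 < B) (t : ℝ) :
    HasDerivAt (paretoIILogPDF B b)
      (b * Real.log B ^ 2 * B ^ t * (1 + B ^ t) ^ (-b - 2) * (1 - b * B ^ t)) t := by
  have hpos : 0 < 1 + B ^ t := by positivity
  have h := ((Real.hasStrictDerivAt_const_rpow hB t).hasDerivAt.fun_mul
    (((Real.hasStrictDerivAt_const_rpow hB t).hasDerivAt.const_add 1).rpow_const (p := -b - 1)
      (Or.inl hpos.ne'))).const_mul (b * Real.log B)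
  have hsplit : (1 + B ^ t) ^ (-b - 1) = (1 + B ^ t) ^ (-b - 2) * (1 + B ^ t) := by
    rw [← Real.rpow_add_one hpos.ne']; ring_nf
  refine h.congr_deriv ?_
  rw [show -b - 1 - 1 = -b - 2 by ring, hsplit]
  ring

lemma paretoIILogPDF_nonneg (hB : 1 ≤ B) (hb : 0 ≤ b) (t : ℝ) :
    0 ≤ paretoIILogPDF B b t := by
  have := Real.log_nonneg hB
  unfold paretoIILogPDF
  positivity

lemma paretoIILogPDF_le (hB : 1 ≤ B) (hb : 0 ≤ b) (t : ℝ) :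
    paretoIILogPDF B b t ≤ b * Real.log B := by
  have hu : 0 < B ^ t := by positivity
  have hle : (1 + B ^ t) ^ (-b - 1) ≤ (1 + B ^ t)⁻¹ := by
    rw [← Real.rpow_neg_one]
    exact Real.rpow_le_rpow_of_exponent_le (by linarith) (by linarith)
  have hfrac : B ^ t * (1 + B ^ t) ^ (-b - 1) ≤ 1 :=
    calc B ^ t * (1 + B ^ t) ^ (-b - 1) ≤ B ^ t * (1 + B ^ t)⁻¹ := by gcongr
      _ ≤ 1 := by rw [mul_inv_le_iff₀ (by positivity)]; linarith
  simpa [paretoIILogPDF] using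
    mul_le_mul_of_nonneg_left hfrac (mul_nonneg hb (Real.log_nonneg hB))

lemma differentiable_paretoIILogPDF (hB : 0 < B) : Differentiable ℝ (paretoIILogPDF B b) :=
  fun t => (hasDerivAt_paretoIILogPDF hB t).differentiableAt

lemma paretoIILogPDF_monotoneOn (hB : 1 < B) (hb : 0 < b) :
    MonotoneOn (paretoIILogPDF B b) (Iic (Real.logb B b⁻¹)) := by
  have hdiff := differentiable_paretoIILogPDF (b := b) (by linarith : 0 < B)
  refine monotoneOn_of_deriv_nonneg (convex_Iic _) hdiff.continuous.continuousOn
    hdiff.differentiableOn fun t ht => ?_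
  rw [interior_Iic, mem_Iio, ← not_le, Real.logb_le_iff_le_rpow hB (inv_pos.2 hb), not_le,
    inv_eq_one_div, lt_div_iff₀' hb] at ht
  have := Real.log_pos hB
  rw [(hasDerivAt_paretoIILogPDF (by linarith) t).deriv]
  exact mul_nonneg (by positivity) (by linarith)

lemma paretoIILogPDF_antitoneOn (hB : 1 < B) (hb : 0 < b) :
    AntitoneOn (paretoIILogPDF B b) (Ici (Real.logb B b⁻¹)) := by
  have hdiff := differentiable_paretoIILogPDF (b := b) (by linarith : 0 < B)
  refine antitoneOn_of_deriv_nonpos (convex_Ici _) hdiff.continuous.continuousOn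
    hdiff.differentiableOn fun t ht => ?_
  rw [interior_Ici, mem_Ioi, ← not_le, Real.le_logb_iff_rpow_le hB (inv_pos.2 hb), not_le,
    inv_eq_one_div, div_lt_iff₀' hb] at ht
  have := Real.log_pos hB
  rw [(hasDerivAt_paretoIILogPDF (by linarith) t).deriv]
  exact mul_nonpos_of_nonneg_of_nonpos (by positivity) (by linarith)

lemma tendsto_paretoIILogCDF_atTop (hB : 1 < B) (hb : 0 < b) :
    Tendsto (paretoIILogCDF B b) atTop (nhds 1) := by
  have := (tendsto_rpow_neg_atTop hb).comp
    (tendsto_atTop_add_const_left _ 1 (tendsto_rpow_atTop_of_base_gt_one B hB))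
  have h := this.const_sub 1
  rw [sub_zero] at h
  exact h

lemma tendsto_paretoIILogCDF_atBot (hB : 1 < B) :
    Tendsto (paretoIILogCDF B b) atBot (nhds 0) := by
  have := ((tendsto_rpow_atBot_of_base_gt_one B hB).const_add 1).rpow_const (p := -b)
    (Or.inl (by norm_num))
  have h := this.const_sub 1
  rw [add_zero, Real.one_rpow, sub_self] at h
  exact h

lemma paretoIIMeasure_Iic_zero : paretoIIMeasure b (Iic 0) = 0 := by
  rw [paretoIIMeasure, withDensity_apply_eq_zero'
    (Measurable.ite measurableSet_Ici (by fun_prop) measurable_const).ennreal_ofReal.aemeasurable]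
  refine measure_mono_null (fun x ⟨hx, hx0⟩ => ?_) (Real.volume_singleton (a := 0))
  contrapose! hx
  simp [if_neg (lt_of_le_of_ne hx0 hx).not_ge]

lemma paretoIIMeasure_Ico (hb : 0 < b) {u v : ℝ} (hu : 0 ≤ u) (huv : u ≤ v) :
    paretoIIMeasure b (Ico u v) = ENNReal.ofReal ((1 + u) ^ (-b) - (1 + v) ^ (-b)) := by
  set Φ : ℝ → ℝ := fun x => -(1 + x) ^ (-b)
  have hderiv (x : ℝ) (hx : 0 ≤ x) : HasDerivAt Φ (b / (1 + x) ^ (b + 1)) x := by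
    have hx1 : 0 < 1 + x := by linarith
    refine (((hasDerivAt_id x).const_add 1).rpow_const (p := -b) (Or.inl hx1.ne')).neg
      |>.congr_deriv ?_
    rw [div_eq_mul_inv, ← Real.rpow_neg hx1.le, show -(b + 1) = -b - 1 by ring]
    simp
  have hstrict : StrictMonoOn Φ (Ici 0) := fun x hx y hy hxy =>
    neg_lt_neg (Real.rpow_lt_rpow_of_neg (by simp only [mem_Ici] at hx; linarith)
      (by linarith) (by linarith))
  have hsub : Icc u v ⊆ Ici 0 := fun x hx => hu.trans hx.1
  rw [paretoIIMeasure, withDensity_apply _ measurableSet_Ico,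
    setLIntegral_congr_fun measurableSet_Ico fun x hx => by rw [if_pos (hu.trans hx.1)],
    lintegral_deriv_eq_volume_image_of_monotoneOn measurableSet_Ico
      (fun x hx => (hderiv x (hu.trans hx.1)).hasDerivWithinAt)
      (hstrict.monotoneOn.mono (Ico_subset_Icc_self.trans hsub)),
    ContinuousOn.image_Ico_of_strictMonoOn huv
      (fun x hx => (hderiv x (hsub hx)).continuousAt.continuousWithinAt) (hstrict.mono hsub),
    Real.volume_Ico]
  simp only [Φ]
  ring_nf

lemma paretoIIMeasure_fract_logb_lt (hB : 1 < B) (hb : 0 < b) (hz : 0 ≤ z)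
    (hz1 : z ≤ 1) :
    paretoIIMeasure b {x | Int.fract (Real.logb B x) < z} =
      ∑' n : ℤ, ENNReal.ofReal (paretoIILogCDF B b (n + z) - paretoIILogCDF B b n) := by
  have hnull : paretoIIMeasure b (Ioi 0)ᶜ = 0 := by rw [compl_Ioi]; exact paretoIIMeasure_Iic_zero
  rw [← measure_inter_conull hnull, setOf_fract_logb_lt_inter_Ioi hB hz1,
    measure_iUnion (pairwise_disjoint_Ico_rpow hB hz1) fun n => measurableSet_Ico]
  congr 1 with n
  rw [paretoIIMeasure_Ico hb (Real.rpow_pos_of_pos (by linarith) _).le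
    (Real.rpow_le_rpow_of_exponent_le hB.le (by linarith)), paretoIILogCDF, paretoIILogCDF]
  ring_nf

lemma abs_toReal_paretoIIMeasure_fract_logb_lt_sub_le (hB : 1 < B) (hb : 0 < b) (hz : 0 < z)
    (hz1 : z ≤ 1) :
    |(paretoIIMeasure b {x | Int.fract (Real.logb B x) < z}).toReal - z| ≤
      3 * (b * Real.log B) := by
  have hF := hasDerivAt_paretoIILogCDF (b := b) (by linarith : 0 < B)
  have hr0 := paretoIILogPDF_nonneg hB.le hb.le
  obtain ⟨hsum, hle⟩ := summable_and_abs_tsum_sub_le_of_unimodal hF hr0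
    (paretoIILogPDF_le hB.le hb.le) (paretoIILogPDF_monotoneOn hB hb)
    (paretoIILogPDF_antitoneOn hB hb) (tendsto_paretoIILogCDF_atBot hB)
    (tendsto_paretoIILogCDF_atTop hB hb) hz hz1
  have hnn (n : ℤ) : 0 ≤ paretoIILogCDF B b (n + z) - paretoIILogCDF B b n :=
    sub_nonneg.2 (monotone_of_hasDerivAt_nonneg hF hr0 (by linarith))
  rwa [paretoIIMeasure_fract_logb_lt hB hb hz.le hz1, ← ENNReal.ofReal_tsum_of_nonneg hnn hsum,
    ENNReal.toReal_ofReal (tsum_nonneg hnn)]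

end ParetoII

/-- For `X_b` type II Pareto with density `b/(1+x)^(b+1)` on `[0,∞)`,
`{log₁₀ X_b}` converges in law to the uniform distribution on `[0,1)`
as `b → 0⁺`. -/
theorem pareto_II_benford_limit
    (μ : ℝ → Measure ℝ)
    (hμ : ∀ b : ℝ, 0 < b → μ b = volume.withDensity
      (fun x => ENNReal.ofReal (if 0 ≤ x then b / (1 + x) ^ (b + 1) else 0))) :
    ∀ z ∈ Ioc (0 : ℝ) 1,
      Tendsto (fun b => ((μ b) {x : ℝ | Int.fract (Real.logb 10 x) < z}).toReal)
        (nhdsWithin 0 (Ioi 0)) (nhds z) := by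
  rintro z ⟨hz, hz1⟩
  have hbound : ∀ b ∈ Ioi (0 : ℝ),
      dist ((μ b) {x : ℝ | Int.fract (Real.logb 10 x) < z}).toReal z ≤ 3 * (b * Real.log 10) :=
    fun b hb => by
      have hμb : μ b = paretoIIMeasure b := hμ b hb
      rw [hμb, Real.dist_eq]
      exact abs_toReal_paretoIIMeasure_fract_logb_lt_sub_le (by norm_num) hb hz hz1
  have hlim : Tendsto (fun b : ℝ => 3 * (b * Real.log 10)) (nhdsWithin 0 (Ioi 0)) (nhds 0) :=
    tendsto_nhdsWithin_of_tendsto_nhds <|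
      (by fun_prop : Continuous fun b : ℝ => 3 * (b * Real.log 10)).tendsto' 0 0 (by simp)
  exact tendsto_iff_dist_tendsto_zero.2 <| squeeze_zero' (.of_forall fun _ => dist_nonneg)
    (eventually_nhdsWithin_of_forall hbound) hlim
end

section
/- Let X_σ be lognormal, i.e., log₁₀ X_σ is normally distributed with mean μ and standard deviation σ. Then for every z ∈ (0, 1], P({log₁₀ X_σ} < z) → z as σ → ∞; that is, X_σ tends to satisfy Benford's law as σ → ∞. -/
open MeasureTheory Set Filter ProbabilityTheory
open scoped NNReal

/-!
If `Y ~ N(m, v)` then `Y + t ~ N(m + t, v)`, and the density of `N(m + t, v)` dominates that of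
`N(m, v)` exactly on the half-line `(m + t / 2, ∞)`. Hence the two laws differ on any set by at
most the `N(m, v)`-mass of an interval of length `t`, i.e. by at most `t / √(2πv)`. On the other
hand, averaging the law of `Y + t` over `t ∈ (0, 1]` makes the fractional part exactly uniform,
because `t ↦ 1{{y + t} < z}` is `1`-periodic with mean `z`. Therefore
`|P({Y} < z) - z| ≤ 1 / √(2πv)`, which tends to `0` as `v = σ² → ∞`.
-/

section Hahn

variable {α : Type*} [MeasurableSpace α] {μ ν : Measure α} {A B : Set α}

theorem measureReal_sub_le_of_restrict_le [IsFiniteMeasure μ] [IsFiniteMeasure ν]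
    (hA : MeasurableSet A) (hB : MeasurableSet B) (hle : μ.restrict B ≤ ν.restrict B)
    (hge : ν.restrict Bᶜ ≤ μ.restrict Bᶜ) :
    ν.real A - μ.real A ≤ ν.real B - μ.real B := by
  have hAB : ν.real (A \ B) ≤ μ.real (A \ B) := by
    have := Measure.le_iff'.1 hge A
    rw [Measure.restrict_apply' hB.compl, Measure.restrict_apply' hB.compl, ← sdiff_eq] at this
    exact ENNReal.toReal_mono (measure_ne_top _ _) this
  have hBA : μ.real (B \ A) ≤ ν.real (B \ A) := by
    have := Measure.le_iff'.1 hle Aᶜ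
    rw [Measure.restrict_apply' hB, Measure.restrict_apply' hB, inter_comm, ← sdiff_eq] at this
    exact ENNReal.toReal_mono (measure_ne_top _ _) this
  have hν := measureReal_inter_add_sdiff (μ := ν) (s := A) hB
  have hμ := measureReal_inter_add_sdiff (μ := μ) (s := A) hB
  have hν' := measureReal_inter_add_sdiff (μ := ν) (s := B) hA
  have hμ' := measureReal_inter_add_sdiff (μ := μ) (s := B) hA
  rw [inter_comm] at hν' hμ'
  linarith

theorem abs_measureReal_sub_le_of_restrict_le [IsProbabilityMeasure μ] [IsProbabilityMeasure ν]
    (hA : MeasurableSet A) (hB : MeasurableSet B) (hle : μ.restrict B ≤ ν.restrict B)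
    (hge : ν.restrict Bᶜ ≤ μ.restrict Bᶜ) :
    |ν.real A - μ.real A| ≤ ν.real B - μ.real B := by
  have hcompl := measureReal_sub_le_of_restrict_le hA hB.compl hge (by rwa [compl_compl])
  rw [measureReal_compl hB, measureReal_compl hB, probReal_univ, probReal_univ] at hcompl
  rw [abs_le]
  constructor
  · linarith
  · exact measureReal_sub_le_of_restrict_le hA hB hle hge

end Hahn

section Gaussian

theorem gaussianPDFReal_le_inv_sqrt (m : ℝ) (v : ℝ≥0) (x : ℝ) :
    gaussianPDFReal m v x ≤ (√(2 * Real.pi * v))⁻¹ := by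
  rw [gaussianPDFReal]
  refine mul_le_of_le_one_right (by positivity) (Real.exp_le_one_iff.2 ?_)
  exact div_nonpos_of_nonpos_of_nonneg (neg_nonpos.2 (sq_nonneg _)) (by positivity)

variable {v : ℝ≥0}

theorem gaussianPDFReal_le_of_abs_sub_le {m m' x : ℝ} (h : |x - m'| ≤ |x - m|) :
    gaussianPDFReal m v x ≤ gaussianPDFReal m' v x := by
  rw [gaussianPDFReal, gaussianPDFReal]
  refine mul_le_mul_of_nonneg_left (Real.exp_le_exp.2 ?_) (by positivity)
  exact div_le_div_of_nonneg_right (neg_le_neg (sq_le_sq.2 h)) (by positivity)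

theorem gaussianReal_le_smul_volume (m : ℝ) (hv : v ≠ 0) :
    gaussianReal m v ≤ ENNReal.ofReal (√(2 * Real.pi * v))⁻¹ • volume := by
  rw [gaussianReal_of_var_ne_zero m hv, ← withDensity_const]
  exact withDensity_mono (ae_of_all _ fun x =>
    ENNReal.ofReal_le_ofReal (gaussianPDFReal_le_inv_sqrt m v x))

theorem gaussianReal_restrict_le_of_abs_sub_le {m m' : ℝ} (hv : v ≠ 0) {s : Set ℝ}
    (hs : MeasurableSet s) (h : ∀ x ∈ s, |x - m'| ≤ |x - m|) :
    (gaussianReal m v).restrict s ≤ (gaussianReal m' v).restrict s := by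
  rw [gaussianReal_of_var_ne_zero m hv, gaussianReal_of_var_ne_zero m' hv,
    restrict_withDensity hs, restrict_withDensity hs]
  exact withDensity_mono ((ae_restrict_iff' hs).2 (ae_of_all _ fun x hx =>
    ENNReal.ofReal_le_ofReal (gaussianPDFReal_le_of_abs_sub_le (h x hx))))

theorem measureReal_gaussianReal_Ioc_le (m : ℝ) (hv : v ≠ 0) {a b : ℝ} (hab : a ≤ b) :
    (gaussianReal m v).real (Ioc a b) ≤ (b - a) * (√(2 * Real.pi * v))⁻¹ := by
  have h := Measure.le_iff'.1 (gaussianReal_le_smul_volume m hv) (Ioc a b)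
  rw [Measure.smul_apply, Real.volume_Ioc, smul_eq_mul,
    ← ENNReal.ofReal_mul (by positivity)] at h
  rw [mul_comm]
  exact ENNReal.toReal_le_of_le_ofReal (by positivity) h

theorem abs_measureReal_gaussianReal_add_sub_le {m : ℝ} (hv : v ≠ 0) {t : ℝ} (ht : 0 ≤ t)
    {A : Set ℝ} (hA : MeasurableSet A) :
    |(gaussianReal (m + t) v).real A - (gaussianReal m v).real A|
      ≤ t * (√(2 * Real.pi * v))⁻¹ := by
  set c := m + t / 2 with hc
  have hle : (gaussianReal m v).restrict (Ioi c) ≤ (gaussianReal (m + t) v).restrict (Ioi c) :=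
    gaussianReal_restrict_le_of_abs_sub_le hv measurableSet_Ioi fun x (hx : c < x) => by
      rw [abs_of_pos (by linarith : 0 < x - m), abs_le]
      constructor <;> linarith
  have hge : (gaussianReal (m + t) v).restrict (Ioi c)ᶜ ≤ (gaussianReal m v).restrict (Ioi c)ᶜ :=
    gaussianReal_restrict_le_of_abs_sub_le hv measurableSet_Ioi.compl fun x hx => by
      rw [mem_compl_iff, mem_Ioi, not_lt] at hx
      rw [abs_of_nonpos (by linarith : x - (m + t) ≤ 0), abs_le]
      constructor <;> linarith
  have hshift :
      (gaussianReal (m + t) v).real (Ioi c) = (gaussianReal m v).real (Ioi (c - t)) := by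
    rw [← gaussianReal_map_add_const, map_measureReal_apply (measurable_add_const t)
      measurableSet_Ioi, preimage_add_const_Ioi]
  calc _ ≤ (gaussianReal (m + t) v).real (Ioi c) - (gaussianReal m v).real (Ioi c) :=
        abs_measureReal_sub_le_of_restrict_le hA measurableSet_Ioi hle hge
    _ = (gaussianReal m v).real (Ioc (c - t) c) := by
        rw [hshift, ← Ioi_sdiff_Ioi, measureReal_sdiff (Ioi_subset_Ioi (by linarith))
          measurableSet_Ioi]
    _ ≤ (c - (c - t)) * (√(2 * Real.pi * v))⁻¹ :=
        measureReal_gaussianReal_Ioc_le m hv (by linarith)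
    _ = t * (√(2 * Real.pi * v))⁻¹ := by ring

end Gaussian

section FractPart

variable {z : ℝ}

theorem integral_indicator_fract_lt_add (hz : z ∈ Icc (0 : ℝ) 1) (y : ℝ) :
    ∫ t in (0 : ℝ)..1, (Int.fract ⁻¹' Iio z).indicator (1 : ℝ → ℝ) (y + t) = z := by
  have hper : Function.Periodic ((Int.fract ⁻¹' Iio z).indicator (1 : ℝ → ℝ)) 1 := fun x => by
    simp only [indicator, mem_preimage, Int.fract_add_one, Pi.one_apply]
  rw [intervalIntegral.integral_comp_add_left, add_zero, hper.intervalIntegral_add_eq y 0,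
    zero_add, intervalIntegral.integral_of_le zero_le_one, integral_Ioc_eq_integral_Ioo,
    setIntegral_congr_fun measurableSet_Ioo (g := (Iio z).indicator (1 : ℝ → ℝ)) fun x hx => by
      simp [indicator, Int.fract_eq_self.2 ⟨hx.1.le, hx.2⟩],
    integral_indicator_one measurableSet_Iio, measureReal_restrict_apply measurableSet_Iio,
    Iio_inter_Ioo, min_eq_left hz.2, Real.volume_real_Ioo_of_le hz.1, sub_zero]

theorem abs_measureReal_fract_lt_sub_le {μ : Measure ℝ} [IsProbabilityMeasure μ] {ε : ℝ}
    (hz : z ∈ Icc (0 : ℝ) 1)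
    (hε : ∀ t ∈ Ioc (0 : ℝ) 1, |(μ.map (· + t)).real (Int.fract ⁻¹' Iio z)
      - μ.real (Int.fract ⁻¹' Iio z)| ≤ ε) :
    |μ.real (Int.fract ⁻¹' Iio z) - z| ≤ ε := by
  set S := Int.fract ⁻¹' Iio z
  have hS : MeasurableSet S := measurable_fract measurableSet_Iio
  set E : Set (ℝ × ℝ) := {p | p.2 + p.1 ∈ S}
  have hE : MeasurableSet E := (measurable_snd.add measurable_fst) hS
  have hmap (t : ℝ) : (μ.map (· + t)).real S = ∫ y, E.indicator 1 (t, y) ∂μ := by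
    rw [map_measureReal_apply (measurable_add_const t) hS, ← integral_indicator_one]
    · rfl
    · exact measurable_add_const t hS
  have hint : Integrable (E.indicator (1 : ℝ × ℝ → ℝ)) ((volume.restrict (Ioc 0 1)).prod μ) :=
    (integrable_indicator_iff hE).2 (integrable_const 1).integrableOn
  have hF : IntervalIntegrable (fun t => (μ.map (· + t)).real S) volume 0 1 := by
    rw [intervalIntegrable_iff_integrableOn_Ioc_of_le zero_le_one]
    simp only [hmap]
    exact hint.integral_prod_left
  have havg : ∫ t in (0 : ℝ)..1, (μ.map (· + t)).real S = z := by
    rw [intervalIntegral.integral_of_le zero_le_one]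
    simp_rw [hmap]
    rw [integral_integral_swap (f := fun t y => E.indicator (1 : ℝ × ℝ → ℝ) (t, y)) hint]
    have hslice (y : ℝ) : ∫ t in Ioc (0 : ℝ) 1, E.indicator (1 : ℝ × ℝ → ℝ) (t, y) = z := by
      rw [← intervalIntegral.integral_of_le zero_le_one]
      exact integral_indicator_fract_lt_add hz y
    simp only [hslice, integral_const, probReal_univ, one_smul]
  calc |μ.real S - z| = ‖∫ t in (0 : ℝ)..1, ((μ.map (· + t)).real S - μ.real S)‖ := by
        rw [intervalIntegral.integral_sub hF intervalIntegrable_const, havg,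
          Real.norm_eq_abs, abs_sub_comm]
        simp
    _ ≤ ε * |1 - 0| := intervalIntegral.norm_integral_le_of_norm_le_const
        (by simpa only [uIoc_of_le zero_le_one, Real.norm_eq_abs] using hε)
    _ = ε := by simp

end FractPart

theorem abs_measureReal_gaussianReal_fract_lt_sub_le (m : ℝ) {v : ℝ≥0} (hv : v ≠ 0) {z : ℝ}
    (hz : z ∈ Icc (0 : ℝ) 1) :
    |(gaussianReal m v).real (Int.fract ⁻¹' Iio z) - z| ≤ (√(2 * Real.pi * v))⁻¹ :=
  abs_measureReal_fract_lt_sub_le hz fun t ht => by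
    rw [gaussianReal_map_add_const]
    exact (abs_measureReal_gaussianReal_add_sub_le hv ht.1.le
      (measurable_fract measurableSet_Iio)).trans (mul_le_of_le_one_left (by positivity) ht.2)

theorem lognormal_benford_limit_general
    (m : ℝ) (ν : ℝ≥0 → Measure ℝ)
    (hlog : ∀ σ : ℝ≥0, Measure.map (fun x => Real.logb 10 x) (ν σ)
      = gaussianReal m (σ ^ 2)) :
    ∀ z ∈ Ioc (0 : ℝ) 1,
      Tendsto (fun σ : ℝ≥0 =>
          ((ν σ) {x : ℝ | Int.fract (Real.logb 10 x) < z}).toReal)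
        atTop (nhds z) := by
  intro z hz
  have hlogb : Measurable fun x : ℝ => Real.logb 10 x := Real.measurable_log.div_const _
  have hbound (σ : ℝ≥0) (hσ : σ ≠ 0) :
      ‖((ν σ) {x : ℝ | Int.fract (Real.logb 10 x) < z}).toReal - z‖
        ≤ (√(2 * Real.pi * (σ ^ 2 : ℝ≥0)))⁻¹ := by
    rw [show {x : ℝ | Int.fract (Real.logb 10 x) < z} = _ ⁻¹' (Int.fract ⁻¹' Iio z) from rfl,
      ← Measure.map_apply hlogb (measurable_fract measurableSet_Iio), hlog σ, ← measureReal_def]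
    exact abs_measureReal_gaussianReal_fract_lt_sub_le m (pow_ne_zero 2 hσ)
      (Ioc_subset_Icc_self hz)
  have hvar : Tendsto (fun σ : ℝ≥0 => 2 * Real.pi * ((σ ^ 2 : ℝ≥0) : ℝ)) atTop atTop :=
    (NNReal.tendsto_coe_atTop.2 (tendsto_pow_atTop two_ne_zero)).const_mul_atTop
      (by positivity)
  refine tendsto_sub_nhds_zero_iff.1 (squeeze_zero_norm' ?_
    (tendsto_inv_atTop_zero.comp (Real.tendsto_sqrt_atTop.comp hvar)))
  exact (eventually_gt_atTop 0).mono fun σ hσ => hbound σ hσ.ne'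

/-- Lognormal r.v.'s tend to Benford's law: if `log₁₀ X_σ ~ N(m, σ²)`, then
for every `z ∈ (0,1]`, `P({log₁₀ X_σ} < z) → z` as `σ → ∞`. -/
theorem lognormal_benford_limit
    (m : ℝ) (ν : ℝ≥0 → Measure ℝ)
    (hprob : ∀ σ, IsProbabilityMeasure (ν σ))
    (hpos : ∀ σ, (ν σ) (Ioi (0 : ℝ))ᶜ = 0)
    (hlog : ∀ σ : ℝ≥0, Measure.map (fun x => Real.logb 10 x) (ν σ)
      = gaussianReal m (σ ^ 2)) :
    ∀ z ∈ Ioc (0 : ℝ) 1,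
      Tendsto (fun σ : ℝ≥0 =>
          ((ν σ) {x : ℝ | Int.fract (Real.logb 10 x) < z}).toReal)
        atTop (nhds z) :=
  lognormal_benford_limit_general m ν hlog
end

section
/- Let Y be normally distributed with mean μ and variance σ². Then for every z ∈ (0, 1], |P({Y} < z) − z| < 2/(σ√(2π)). In particular {Y} converges in law to uniform on [0,1) as σ → ∞. -/
open MeasureTheory Set Filter ProbabilityTheory
open scoped NNReal Real

/-!
On a unit cell `[k, k + 1)` a density `f` oscillates by at most its variation
`V k = ∫_{[k, k+1)} |f'|`, so the mass of `[k, k + z)` differs from `z` times the mass of the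
cell by at most `z (1 - z) V k`. Summing over `k`, `P({Y} < z)` differs from `z` by at most
`z (1 - z)` times the total variation of `f`, which for a unimodal density is twice its maximum,
`2 / (σ √(2π))` for the Gaussian.
-/

section CellEstimate

variable {α : Type*} [MeasurableSpace α] {μ : Measure α} {g : α → ℝ} {s t : Set α} {V : ℝ}

lemma abs_measureReal_mul_setIntegral_sub_le (hs : μ s < ⊤) (ht : μ t < ⊤)
    (hgs : IntegrableOn g s μ) (hgt : IntegrableOn g t μ)
    (hosc : ∀ x ∈ s, ∀ y ∈ t, |g x - g y| ≤ V) :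
    |μ.real t * ∫ x in s, g x ∂μ - μ.real s * ∫ y in t, g y ∂μ| ≤ μ.real s * μ.real t * V := by
  have hpoint : ∀ x ∈ s, ‖μ.real t * g x - ∫ y in t, g y ∂μ‖ ≤ V * μ.real t := by
    intro x hx
    have hx_avg : μ.real t * g x - ∫ y in t, g y ∂μ = ∫ y in t, (g x - g y) ∂μ := by
      rw [integral_sub (integrableOn_const (C := g x) ht.ne) hgt, setIntegral_const, smul_eq_mul]
    rw [hx_avg]
    exact norm_setIntegral_le_of_norm_le_const ht fun y hy => hosc x hx y hy
  have hdiff : μ.real t * ∫ x in s, g x ∂μ - μ.real s * ∫ y in t, g y ∂μ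
      = ∫ x in s, (μ.real t * g x - ∫ y in t, g y ∂μ) ∂μ := by
    rw [integral_sub (hgs.const_mul _) (integrableOn_const (C := ∫ y in t, g y ∂μ) hs.ne),
      integral_const_mul, setIntegral_const, smul_eq_mul]
  calc _ = ‖∫ x in s, (μ.real t * g x - ∫ y in t, g y ∂μ) ∂μ‖ := by rw [hdiff, Real.norm_eq_abs]
    _ ≤ V * μ.real t * μ.real s := norm_setIntegral_le_of_norm_le_const hs hpoint
    _ = μ.real s * μ.real t * V := by ring

end CellEstimate

lemma abs_sub_le_setIntegral_abs_of_hasDerivAt {f f' : ℝ → ℝ} {s : Set ℝ} (hs : s.OrdConnected)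
    (hf : ∀ x ∈ s, HasDerivAt f (f' x) x) (hf' : IntegrableOn f' s) {x y : ℝ}
    (hx : x ∈ s) (hy : y ∈ s) :
    |f y - f x| ≤ ∫ t in s, |f' t| := by
  have hxy := hs.uIcc_subset hx hy
  rw [← intervalIntegral.integral_eq_sub_of_hasDerivAt (fun t ht => hf t (hxy ht))
    (hf'.mono_set hxy).intervalIntegrable, ← Real.norm_eq_abs]
  calc ‖∫ t in x..y, f' t‖ ≤ ∫ t in uIoc x y, ‖f' t‖ :=
        intervalIntegral.norm_integral_le_integral_norm_uIoc
    _ ≤ ∫ t in s, |f' t| :=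
        setIntegral_mono_set hf'.abs (ae_of_all _ fun _ => abs_nonneg _)
          (uIoc_subset_uIcc.trans hxy).eventuallyLE

lemma hasSum_setIntegral_Ico_intCast {E : Type*} [NormedAddCommGroup E] [NormedSpace ℝ E]
    {f : ℝ → E} (hf : Integrable f) :
    HasSum (fun k : ℤ => ∫ x in Ico (k : ℝ) (k + 1), f x) (∫ x, f x) := by
  simpa only [iUnion_Ico_intCast, setIntegral_univ] using
    hasSum_integral_iUnion (fun _ => measurableSet_Ico) (pairwise_disjoint_Ico_intCast ℝ)
      hf.integrableOn

lemma setOf_fract_lt_eq_iUnion_Ico {z : ℝ} (hz : z ≤ 1) :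
    {y : ℝ | Int.fract y < z} = ⋃ k : ℤ, Ico (k : ℝ) (k + z) := by
  ext y
  simp only [mem_ofPred_eq, mem_iUnion, mem_Ico, Int.fract]
  constructor
  · intro h
    exact ⟨⌊y⌋, Int.floor_le y, by linarith⟩
  · rintro ⟨k, hk, hkz⟩
    rw [Int.floor_eq_iff.mpr ⟨hk, by linarith⟩]
    linarith

theorem abs_setIntegral_fract_lt_sub_le {f f' : ℝ → ℝ} (hf : ∀ x, HasDerivAt f (f' x) x)
    (hfi : Integrable f) (hf'i : Integrable f') {z : ℝ} (hz0 : 0 ≤ z) (hz1 : z ≤ 1) :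
    |(∫ x in {y | Int.fract y < z}, f x) - z * ∫ x, f x| ≤ z * (1 - z) * ∫ x, |f' x| := by
  set T : ℤ → ℝ := fun k => ∫ x in Ico (k : ℝ) (k + z), f x
  set U : ℤ → ℝ := fun k => ∫ x in Ico ((k : ℝ) + z) (k + 1), f x
  set H : ℤ → ℝ := fun k => ∫ x in Ico (k : ℝ) (k + 1), f x
  set V : ℤ → ℝ := fun k => ∫ x in Ico (k : ℝ) (k + 1), |f' x|
  have hT : HasSum T (∫ x in {y | Int.fract y < z}, f x) := by
    rw [setOf_fract_lt_eq_iUnion_Ico hz1]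
    refine hasSum_integral_iUnion (fun _ => measurableSet_Ico) (fun i j hij => ?_) hfi.integrableOn
    exact (pairwise_disjoint_Ico_intCast ℝ hij).mono (Ico_subset_Ico_right (by linarith))
      (Ico_subset_Ico_right (by linarith))
  have hsplit : ∀ k, H k = T k + U k := fun k => by
    rw [← setIntegral_union Ico_disjoint_Ico_same measurableSet_Ico hfi.integrableOn
      hfi.integrableOn, Ico_union_Ico_eq_Ico (by linarith) (by linarith)]
  have hcell : ∀ k, ‖T k - z * H k‖ ≤ z * (1 - z) * V k := by
    intro k
    have hosc : ∀ x ∈ Ico (k : ℝ) (k + z), ∀ y ∈ Ico ((k : ℝ) + z) (k + 1), |f x - f y| ≤ V k :=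
      fun x hx y hy => abs_sub_le_setIntegral_abs_of_hasDerivAt ordConnected_Ico
        (fun t _ => hf t) hf'i.integrableOn ⟨by linarith [hy.1], hy.2⟩
        ⟨hx.1, by linarith [hx.2]⟩
    have h := abs_measureReal_mul_setIntegral_sub_le measure_Ico_lt_top measure_Ico_lt_top
      hfi.integrableOn hfi.integrableOn hosc
    rw [Real.volume_real_Ico_of_le (by linarith), Real.volume_real_Ico_of_le (by linarith)] at h
    rw [Real.norm_eq_abs, hsplit]
    convert h using 2 <;> ring
  simpa only [Real.norm_eq_abs] using
    (hT.sub ((hasSum_setIntegral_Ico_intCast hfi).mul_left z)).norm_le_of_bounded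
      ((hasSum_setIntegral_Ico_intCast hf'i.abs).mul_left (z * (1 - z))) hcell

theorem integral_abs_eq_two_mul_of_hasDerivAt_of_unimodal {f f' : ℝ → ℝ} {m : ℝ}
    (hf : ∀ x, HasDerivAt f (f' x) x) (hfi : Integrable f) (hf'i : Integrable f')
    (hmono : ∀ x ≤ m, 0 ≤ f' x) (hanti : ∀ x, m ≤ x → f' x ≤ 0) :
    ∫ x, |f' x| = 2 * f m := by
  have hleft : ∫ x in Iic m, |f' x| = f m := by
    rw [setIntegral_congr_fun measurableSet_Iic fun x hx => abs_of_nonneg (hmono x hx),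
      integral_Iic_of_hasDerivAt_of_tendsto' (fun x _ => hf x) hf'i.integrableOn
        (tendsto_zero_of_hasDerivAt_of_integrableOn_Iic (a := m) (fun x _ => hf x)
          hf'i.integrableOn hfi.integrableOn), sub_zero]
  have hright : ∫ x in Ioi m, |f' x| = f m := by
    rw [setIntegral_congr_fun measurableSet_Ioi fun x hx => abs_of_nonpos (hanti x (le_of_lt hx)),
      integral_neg, integral_Ioi_of_hasDerivAt_of_tendsto' (fun x _ => hf x) hf'i.integrableOn
        (tendsto_zero_of_hasDerivAt_of_integrableOn_Ioi (a := m) (fun x _ => hf x)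
          hf'i.integrableOn hfi.integrableOn), zero_sub, neg_neg]
  rw [← integral_add_compl measurableSet_Iic hf'i.abs, compl_Iic, hleft, hright, two_mul]

lemma hasDerivAt_gaussianPDFReal (m : ℝ) (v : ℝ≥0) (x : ℝ) :
    HasDerivAt (gaussianPDFReal m v) (-(x - m) / v * gaussianPDFReal m v x) x := by
  have hsq : HasDerivAt (fun x => (x - m) ^ 2) (2 * (x - m)) x := by
    simpa using ((hasDerivAt_id' x).sub_const m).fun_pow 2
  have hexp : HasDerivAt (fun x => -(x - m) ^ 2 / (2 * v)) (-(x - m) / v) x :=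
    (hsq.neg.div_const _).congr_deriv (by rw [← mul_neg, mul_div_mul_left _ _ two_ne_zero])
  rw [gaussianPDFReal_def]
  beta_reduce
  exact (hexp.exp.const_mul _).congr_deriv (by ring)

lemma integrable_deriv_gaussianPDFReal (m : ℝ) {v : ℝ≥0} (hv : v ≠ 0) :
    Integrable fun x => -(x - m) / v * gaussianPDFReal m v x := by
  have hb : (0 : ℝ) < 1 / (2 * v) := by positivity
  refine (((integrable_mul_exp_neg_mul_sq hb).comp_sub_right m).const_mul
    (-(√(2 * π * v))⁻¹ / v)).congr (ae_of_all _ fun x => ?_)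
  simp only [gaussianPDFReal_def]
  rw [show -(1 / (2 * (v : ℝ))) * (x - m) ^ 2 = -(x - m) ^ 2 / (2 * v) by ring]
  ring

lemma integral_abs_deriv_gaussianPDFReal (m : ℝ) {v : ℝ≥0} (hv : v ≠ 0) :
    ∫ x, |-(x - m) / v * gaussianPDFReal m v x| = 2 / √(2 * π * v) := by
  rw [integral_abs_eq_two_mul_of_hasDerivAt_of_unimodal (m := m) (hasDerivAt_gaussianPDFReal m v)
    (integrable_gaussianPDFReal m v) (integrable_deriv_gaussianPDFReal m hv)
    (fun x hx => mul_nonneg (div_nonneg (by linarith) v.2) (gaussianPDFReal_nonneg m v x))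
    (fun x hx => mul_nonpos_of_nonpos_of_nonneg (div_nonpos_of_nonpos_of_nonneg (by linarith) v.2)
      (gaussianPDFReal_nonneg m v x))]
  simp [gaussianPDFReal_def, div_eq_mul_inv]

theorem abs_gaussianReal_fract_lt_sub_le (m : ℝ) {v : ℝ≥0} (hv : v ≠ 0) {z : ℝ} (hz0 : 0 ≤ z)
    (hz1 : z ≤ 1) :
    |(gaussianReal m v {y : ℝ | Int.fract y < z}).toReal - z|
      ≤ z * (1 - z) * (2 / √(2 * π * v)) := by
  rw [gaussianReal_apply_eq_integral m hv,
    ENNReal.toReal_ofReal (integral_nonneg fun x => gaussianPDFReal_nonneg m v x),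
    ← integral_abs_deriv_gaussianPDFReal m hv]
  simpa only [integral_gaussianPDFReal_eq_one m hv, mul_one] using
    abs_setIntegral_fract_lt_sub_le (hasDerivAt_gaussianPDFReal m v)
      (integrable_gaussianPDFReal m v) (integrable_deriv_gaussianPDFReal m hv) hz0 hz1

/-- If `Y ~ N(m, σ²)` then `|P({Y} < z) − z| < 2/(σ√(2π))` for every
`z ∈ (0,1]`; in particular `{Y}` converges in law to the uniform
distribution on `[0,1)` as `σ → ∞`. -/
theorem gaussian_fract_near_uniform (m : ℝ) :
    (∀ σ : ℝ, 0 < σ → ∀ z ∈ Ioc (0 : ℝ) 1,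
      |((gaussianReal m (σ ^ 2).toNNReal) {y : ℝ | Int.fract y < z}).toReal - z|
        < 2 / (σ * Real.sqrt (2 * π))) ∧
    ∀ z ∈ Ico (0 : ℝ) 1,
      Tendsto (fun σ : ℝ =>
          ((gaussianReal m (σ ^ 2).toNNReal) {y : ℝ | Int.fract y < z}).toReal)
        atTop (nhds z) := by
  have hbound : ∀ σ : ℝ, 0 < σ → ∀ z ∈ Icc (0 : ℝ) 1,
      |((gaussianReal m (σ ^ 2).toNNReal) {y : ℝ | Int.fract y < z}).toReal - z|
        ≤ z * (1 - z) * (2 / (σ * √(2 * π))) := by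
    intro σ hσ z hz
    have hv : (σ ^ 2).toNNReal ≠ 0 := (Real.toNNReal_pos.mpr (by positivity)).ne'
    have hsqrt : √(2 * π * (σ ^ 2).toNNReal) = σ * √(2 * π) := by
      rw [Real.coe_toNNReal _ (sq_nonneg σ), Real.sqrt_mul' _ (sq_nonneg σ), Real.sqrt_sq hσ.le,
        mul_comm]
    simpa only [hsqrt] using abs_gaussianReal_fract_lt_sub_le m hv hz.1 hz.2
  refine ⟨fun σ hσ z hz => (hbound σ hσ z (Ioc_subset_Icc_self hz)).trans_lt ?_, fun z hz => ?_⟩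
  · have hB : 0 < 2 / (σ * √(2 * π)) := by positivity
    nlinarith [sq_nonneg (2 * z - 1)]
  · have hlim : Tendsto (fun σ : ℝ => z * (1 - z) * (2 / (σ * √(2 * π)))) atTop (nhds 0) := by
      simpa using (tendsto_const_nhds.div_atTop
        (tendsto_id.atTop_mul_const (by positivity : 0 < √(2 * π)))).const_mul (z * (1 - z))
    refine tendsto_iff_norm_sub_tendsto_zero.2 (squeeze_zero' (Eventually.of_forall fun _ =>
      norm_nonneg _) ?_ hlim)
    filter_upwards [eventually_gt_atTop 0] with σ hσ
    exact hbound σ hσ z (Ico_subset_Icc_self hz)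
end

section
/- Let X be uniformly distributed on (0, k] with k > 0. Then for every z ∈ (0, 1], |P({√X} < z) − z| < 4/√k. Consequently {√X_k} converges in law to the uniform distribution on [0,1) as k → ∞. -/
/-!
For `x ≥ 0` and `0 ≤ z ≤ 1`, `fract √x < z` exactly when `x` lies in one of the disjoint blocks
`[n², (n + z)²)`, whose lengths `2nz + z²` sum over `n < M` to `zM² - Mz(1 - z)`.
The blocks with `n < ⌊√k⌋` lie in `[0, k]`, and those with `n ≤ ⌊√k⌋` cover the part of the set
in `[0, k]`, so its measure is within `3√k` of `zk` once `k ≥ 1`; for `k < 1` the bound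
`4/√k > 1` is trivial. Replacing `(0, k]` by `[0, k]` changes no measure but lets the block
`[0, z²)` fit.
-/

open MeasureTheory Set Filter Function

theorem Int.fract_lt_iff_exists_nat {R : Type*} [Ring R] [LinearOrder R] [IsStrictOrderedRing R]
    [FloorRing R] {y z : R} (hy : 0 ≤ y) :
    Int.fract y < z ↔ ∃ n : ℕ, (n : R) ≤ y ∧ y < n + z := by
  constructor
  · intro h
    refine ⟨⌊y⌋₊, Nat.floor_le hy, ?_⟩
    rw [Int.fract, ← Int.natCast_floor_eq_floor hy, Int.cast_natCast] at h
    exact sub_lt_iff_lt_add'.1 h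
  · rintro ⟨n, hny, hyn⟩
    have hn : ((n : ℤ) : R) ≤ ⌊y⌋ := Int.cast_le.2 (Int.le_floor.2 (by exact_mod_cast hny))
    rw [Int.cast_natCast] at hn
    exact (sub_le_sub_left hn y).trans_lt (sub_lt_iff_lt_add'.2 hyn)

theorem Real.fract_sqrt_lt_iff {x z : ℝ} (hx : 0 ≤ x) (hz : 0 ≤ z) :
    Int.fract √x < z ↔ ∃ n : ℕ, (n : ℝ) ^ 2 ≤ x ∧ x < (n + z) ^ 2 := by
  rw [Int.fract_lt_iff_exists_nat (Real.sqrt_nonneg x)]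
  exact exists_congr fun n =>
    and_congr (Real.le_sqrt n.cast_nonneg hx) (Real.sqrt_lt hx (by positivity))

theorem sum_range_add_sq_sub_sq {R : Type*} [CommRing R] (z : R) (M : ℕ) :
    ∑ n ∈ Finset.range M, ((n + z) ^ 2 - (n : R) ^ 2) = z * M ^ 2 - M * z * (1 - z) := by
  induction M with
  | zero => simp
  | succ M ih =>
    rw [Finset.sum_range_succ, ih]
    push_cast
    ring

section SquareIntervals

variable {z : ℝ}

theorem pairwise_disjoint_Ico_sq_add_sq (hz0 : 0 ≤ z) (hz1 : z ≤ 1) :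
    Pairwise (Disjoint on fun n : ℕ => Ico ((n : ℝ) ^ 2) ((n + z) ^ 2)) := by
  have hmono : Monotone fun n : ℕ => (n : ℝ) ^ 2 := fun a b h => by
    dsimp only
    gcongr
  refine fun m n hmn => (hmono.pairwise_disjoint_on_Ico_succ hmn).mono ?_ ?_ <;>
  · refine Ico_subset_Ico_right ?_
    simp only [Order.succ_eq_add_one, Nat.cast_add, Nat.cast_one]
    gcongr

theorem volume_biUnion_Ico_sq_add_sq (hz0 : 0 ≤ z) (hz1 : z ≤ 1) (M : ℕ) :
    volume (⋃ n ∈ Finset.range M, Ico ((n : ℝ) ^ 2) ((n + z) ^ 2))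
      = ENNReal.ofReal (z * M ^ 2 - M * z * (1 - z)) := by
  rw [measure_biUnion_finset ((pairwise_disjoint_Ico_sq_add_sq hz0 hz1).set_pairwise _)
    fun _ _ => measurableSet_Ico]
  simp_rw [Real.volume_Ico]
  rw [← ENNReal.ofReal_sum_of_nonneg fun n _ =>
      sub_nonneg.2 (pow_le_pow_left₀ n.cast_nonneg (le_add_of_nonneg_right hz0) 2),
    sum_range_add_sq_sub_sq]

theorem fract_sqrt_lt_inter_Icc_subset (hz : 0 ≤ z) (k : ℝ) :
    {x : ℝ | Int.fract √x < z} ∩ Icc 0 k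
      ⊆ ⋃ n ∈ Finset.range (⌊√k⌋₊ + 1), Ico ((n : ℝ) ^ 2) ((n + z) ^ 2) := by
  rintro x ⟨hx, hx0, hxk⟩
  obtain ⟨n, hnx, hxn⟩ := (Real.fract_sqrt_lt_iff hx0 hz).1 hx
  have hn : (n : ℝ) ≤ √k := (Real.le_sqrt n.cast_nonneg (hx0.trans hxk)).2 (hnx.trans hxk)
  exact mem_biUnion (Finset.mem_range_succ_iff.2 (Nat.le_floor hn)) ⟨hnx, hxn⟩

theorem biUnion_Ico_sq_add_sq_subset (hz0 : 0 ≤ z) (hz1 : z ≤ 1) (k : ℝ) :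
    ⋃ n ∈ Finset.range ⌊√k⌋₊, Ico ((n : ℝ) ^ 2) ((n + z) ^ 2)
      ⊆ {x : ℝ | Int.fract √x < z} ∩ Icc 0 k := by
  simp only [subset_def, mem_iUnion, Finset.mem_range, exists_prop]
  rintro x ⟨n, hn, hnx, hxn⟩
  have hx0 : 0 ≤ x := (sq_nonneg _).trans hnx
  have hn1 : (n : ℝ) + 1 ≤ √k :=
    le_trans (by exact_mod_cast hn) (Nat.floor_le (Real.sqrt_nonneg k))
  have hxk : x ≤ k := calc
    x ≤ (n + z) ^ 2 := hxn.le
    _ ≤ (n + 1) ^ 2 := by gcongr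
    _ ≤ k := (Real.le_sqrt' (by positivity)).1 hn1
  exact ⟨(Real.fract_sqrt_lt_iff hx0 hz0).2 ⟨n, hnx, hxn⟩, hx0, hxk⟩

end SquareIntervals

theorem abs_volume_fract_sqrt_lt_inter_Icc_sub_le {z k : ℝ} (hz0 : 0 ≤ z) (hz1 : z ≤ 1)
    (hk : 1 ≤ k) :
    |(volume ({x : ℝ | Int.fract √x < z} ∩ Icc 0 k)).toReal - z * k| ≤ 3 * √k := by
  set s := √k
  set N := ⌊s⌋₊
  have hs1 : 1 ≤ s := Real.one_le_sqrt.2 hk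
  have hsk : s ^ 2 = k := Real.sq_sqrt (zero_le_one.trans hk)
  have hNs : (N : ℝ) ≤ s := Nat.floor_le (Real.sqrt_nonneg k)
  have hsN : s - 1 ≤ N := by linarith [Nat.lt_floor_add_one s]
  have hfin : volume ({x : ℝ | Int.fract √x < z} ∩ Icc 0 k) ≠ ⊤ :=
    ((measure_mono inter_subset_right).trans_lt measure_Icc_lt_top).ne
  have hlower : z * N ^ 2 - N * z * (1 - z)
      ≤ (volume ({x : ℝ | Int.fract √x < z} ∩ Icc 0 k)).toReal := by
    refine (ENNReal.ofReal_le_iff_le_toReal hfin).1 ?_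
    rw [← volume_biUnion_Ico_sq_add_sq hz0 hz1]
    exact measure_mono (biUnion_Ico_sq_add_sq_subset hz0 hz1 k)
  have hupper : (volume ({x : ℝ | Int.fract √x < z} ∩ Icc 0 k)).toReal
      ≤ z * (N + 1) ^ 2 - (N + 1) * z * (1 - z) := by
    have hnonneg : 0 ≤ z * (N + 1) ^ 2 - (N + 1) * z * (1 - z) := by
      rw [show z * (N + 1) ^ 2 - (N + 1) * z * (1 - z) = z * (N + 1) * (N + z) by ring]
      positivity
    refine ENNReal.toReal_le_of_le_ofReal hnonneg ?_
    have h := volume_biUnion_Ico_sq_add_sq hz0 hz1 (N + 1)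
    push_cast at h
    rw [← h]
    exact measure_mono (fract_sqrt_lt_inter_Icc_subset hz0 k)
  have hN2 : (s - 1) ^ 2 ≤ (N : ℝ) ^ 2 := pow_le_pow_left₀ (by linarith) hsN 2
  have hN2' : ((N : ℝ) + 1) ^ 2 ≤ (s + 1) ^ 2 := by gcongr
  rw [abs_le]
  constructor <;> nlinarith [mul_le_mul_of_nonneg_left hN2 hz0,
    mul_le_mul_of_nonneg_left hN2' hz0, mul_nonneg hz0 (sub_nonneg.2 hz1)]

theorem abs_volume_fract_sqrt_lt_inter_Icc_div_sub_lt {z k : ℝ} (hz0 : 0 ≤ z) (hz1 : z ≤ 1)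
    (hk : 0 < k) :
    |(volume ({x : ℝ | Int.fract √x < z} ∩ Icc 0 k)).toReal / k - z| < 4 / √k := by
  set V := (volume ({x : ℝ | Int.fract √x < z} ∩ Icc 0 k)).toReal
  have hs : 0 < √k := Real.sqrt_pos.2 hk
  rcases lt_or_ge k 1 with hk1 | hk1
  · have hVk : V ≤ k := ENNReal.toReal_le_of_le_ofReal hk.le <|
      (measure_mono inter_subset_right).trans_eq (by rw [Real.volume_Icc, sub_zero])
    have hP0 : 0 ≤ V / k := div_nonneg ENNReal.toReal_nonneg hk.le
    have hP1 : V / k ≤ 1 := div_le_one_of_le₀ hVk hk.le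
    have hs1 : √k < 1 := (Real.sqrt_lt' one_pos).2 (by linarith)
    have h4 : 1 < 4 / √k := (one_lt_div hs).2 (by linarith)
    rw [abs_lt]
    constructor <;> linarith
  · calc |V / k - z| = |V - z * k| / k := by
          rw [div_sub' hk.ne', abs_div, abs_of_pos hk, mul_comm]
      _ ≤ 3 * √k / k := by
          gcongr
          exact abs_volume_fract_sqrt_lt_inter_Icc_sub_le hz0 hz1 hk1
      _ = 3 / √k := by
          rw [div_eq_div_iff hk.ne' hs.ne', mul_assoc, Real.mul_self_sqrt hk.le]
      _ < 4 / √k := by gcongr; norm_num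

theorem toReal_inv_ofReal_smul_restrict_Ioc_apply {k : ℝ} (hk : 0 < k) (t : Set ℝ) :
    (((ENNReal.ofReal k)⁻¹ • volume.restrict (Ioc 0 k)) t).toReal
      = (volume (t ∩ Icc 0 k)).toReal / k := by
  rw [Measure.restrict_congr_set Ioc_ae_eq_Icc, Measure.smul_apply,
    Measure.restrict_apply' measurableSet_Icc, smul_eq_mul, ENNReal.toReal_mul,
    ENNReal.toReal_inv, ENNReal.toReal_ofReal hk.le, inv_mul_eq_div]

/-- If `X ~ U((0,k])` then `|P({√X} < z) − z| < 4/√k` for every `z ∈ (0,1]`;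
consequently `{√X_k}` converges in law to the uniform distribution on `[0,1)`
as `k → ∞`. -/
theorem uniform_sqrt_near_benford
    (μ : ℝ → Measure ℝ)
    (hμ : ∀ k : ℝ, 0 < k →
      μ k = (ENNReal.ofReal k)⁻¹ • volume.restrict (Ioc 0 k)) :
    (∀ k : ℝ, 0 < k → ∀ z ∈ Ioc (0 : ℝ) 1,
      |((μ k) {x : ℝ | Int.fract (Real.sqrt x) < z}).toReal - z|
        < 4 / Real.sqrt k) ∧
    ∀ z ∈ Ico (0 : ℝ) 1,
      Tendsto (fun k => ((μ k) {x : ℝ | Int.fract (Real.sqrt x) < z}).toReal)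
        atTop (nhds z) := by
  have hbound : ∀ k : ℝ, 0 < k → ∀ z ∈ Icc (0 : ℝ) 1,
      |((μ k) {x : ℝ | Int.fract √x < z}).toReal - z| < 4 / √k := fun k hk z hz => by
    rw [hμ k hk, toReal_inv_ofReal_smul_restrict_Ioc_apply hk]
    exact abs_volume_fract_sqrt_lt_inter_Icc_div_sub_lt hz.1 hz.2 hk
  refine ⟨fun k hk z hz => hbound k hk z (Ioc_subset_Icc_self hz), fun z hz => ?_⟩
  rw [tendsto_iff_norm_sub_tendsto_zero]
  refine squeeze_zero' (Eventually.of_forall fun _ => norm_nonneg _) ?_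
    ((tendsto_const_nhds (x := (4 : ℝ))).div_atTop Real.tendsto_sqrt_atTop)
  filter_upwards [eventually_gt_atTop 0] with k hk
  exact (hbound k hk z (Ico_subset_Icc_self hz)).le
end

section
/- Let X be uniformly distributed on (0, k]. Then {πX²} converges in law to the uniform distribution on [0, 1) as k → ∞; i.e., for every δ ∈ (0, 1), P({πX²} < δ) → δ as k → ∞. -/
open MeasureTheory Set Filter Finset Function
open scoped Real

/-!
For `x > 0` we have `{c x²} < δ` exactly on the intervals `[√(n/c), √((n+δ)/c))`, `n ∈ ℕ`, and
about `c k²` of them meet `(0, k]`. By concavity of `y ↦ √(y/c)` the length of the `n`-th interval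
lies between `δ` times the gap `√((n+1)/c) - √(n/c)` that follows it and `δ` times the gap
`√(n/c) - √((n-1)/c)` that precedes it. The gaps telescope, so the intervals in `(0, k]` have total
length `δ k` up to an error `1/√c`, and dividing by `k` gives the limit.
-/

namespace ConcaveOn

variable {f : ℝ → ℝ} {δ : ℝ}

theorem mul_sub_le_sub (hf : ConcaveOn ℝ (Ici 0) f) (hδ₀ : 0 ≤ δ) (hδ₁ : δ ≤ 1) {x : ℝ}
    (hx : 0 ≤ x) : δ * (f (x + 1) - f x) ≤ f (x + δ) - f x := by
  have h := hf.2 (mem_Ici.2 hx) (mem_Ici.2 (by linarith : (0 : ℝ) ≤ x + 1))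
    (by linarith : 0 ≤ 1 - δ) hδ₀ (by ring)
  simp only [smul_eq_mul] at h
  rw [show (1 - δ) * x + δ * (x + 1) = x + δ by ring] at h
  linarith

theorem sub_le_mul_sub (hf : ConcaveOn ℝ (Ici 0) f) (hδ₀ : 0 ≤ δ) {x : ℝ} (hx : 0 ≤ x) :
    f (x + 1 + δ) - f (x + 1) ≤ δ * (f (x + 1) - f x) := by
  have hδ : 0 < 1 + δ := by linarith
  have h := hf.2 (mem_Ici.2 hx) (mem_Ici.2 (by linarith : (0 : ℝ) ≤ x + 1 + δ))
    (div_nonneg hδ₀ hδ.le) (inv_nonneg.2 hδ.le) (by field_simp; ring)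
  simp only [smul_eq_mul] at h
  rw [show δ / (1 + δ) * x + (1 + δ)⁻¹ * (x + 1 + δ) = x + 1 by field_simp; ring] at h
  have := mul_le_mul_of_nonneg_left h hδ.le
  field_simp at this
  linarith

theorem mul_sub_le_sum_sub (hf : ConcaveOn ℝ (Ici 0) f) (hδ₀ : 0 ≤ δ) (hδ₁ : δ ≤ 1) (M : ℕ) :
    δ * (f M - f 0) ≤ ∑ n ∈ range M, (f (n + δ) - f n) := by
  calc δ * (f M - f 0) = ∑ n ∈ range M, δ * (f (n + 1 : ℕ) - f n) := by
        rw [← mul_sum, sum_range_sub (fun n : ℕ => f n), Nat.cast_zero]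
    _ ≤ ∑ n ∈ range M, (f (n + δ) - f n) := sum_le_sum fun n _ => by
        exact_mod_cast hf.mul_sub_le_sub hδ₀ hδ₁ n.cast_nonneg

theorem sum_sub_le (hf : ConcaveOn ℝ (Ici 0) f) (hδ₀ : 0 ≤ δ) (M : ℕ) :
    ∑ n ∈ range (M + 1), (f (n + δ) - f n) ≤ f δ - f 0 + δ * (f M - f 0) := by
  have telescope := sum_range_sub (fun n : ℕ => f n) M
  push_cast at telescope
  have := sum_le_sum fun n (_ : n ∈ range M) => hf.sub_le_mul_sub hδ₀ n.cast_nonneg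
  rw [← mul_sum, telescope] at this
  rw [sum_range_succ']
  push_cast
  rw [zero_add]
  linarith

end ConcaveOn

theorem Real.sqrt_add_le_add_sqrt {a b : ℝ} (ha : 0 ≤ a) (hb : 0 ≤ b) : √(a + b) ≤ √a + √b := by
  rw [Real.sqrt_le_left (by positivity), add_sq, Real.sq_sqrt ha, Real.sq_sqrt hb]
  nlinarith [Real.sqrt_nonneg a, Real.sqrt_nonneg b]

theorem concaveOn_sqrt_div {c : ℝ} (hc : 0 ≤ c) : ConcaveOn ℝ (Ici 0) fun y => √(y / c) := by
  simp_rw [Real.sqrt_div' _ hc, div_eq_inv_mul]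
  exact Real.strictConcaveOn_sqrt.concaveOn.smul (inv_nonneg.2 (Real.sqrt_nonneg c))

section FractMulSq

variable {c δ x k : ℝ}

theorem mem_Ico_sqrt_div_iff (hc : 0 < c) (hx : 0 ≤ x) {a b : ℝ} :
    x ∈ Ico √(a / c) √(b / c) ↔ c * x ^ 2 ∈ Ico a b := by
  rw [Set.mem_Ico, Set.mem_Ico, Real.sqrt_le_left hx, Real.lt_sqrt hx, div_le_iff₀ hc,
    lt_div_iff₀ hc, mul_comm c]

theorem fract_mul_sq_lt_of_mem_Ico (hc : 0 < c) (hδ : δ ≤ 1) (hx : 0 ≤ x) {n : ℕ}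
    (h : x ∈ Ico √(n / c) √((n + δ) / c)) : Int.fract (c * x ^ 2) < δ := by
  obtain ⟨hn, hnδ⟩ := (mem_Ico_sqrt_div_iff hc hx).1 h
  have hfloor : ⌊c * x ^ 2⌋ = n := Int.floor_eq_iff.2 ⟨by simpa using hn, by push_cast; linarith⟩
  rw [Int.fract, hfloor]
  push_cast
  linarith

theorem mem_Ico_of_fract_mul_sq_lt (hc : 0 < c) (hx : 0 ≤ x) (h : Int.fract (c * x ^ 2) < δ) :
    x ∈ Ico √(⌊c * x ^ 2⌋₊ / c) √((⌊c * x ^ 2⌋₊ + δ) / c) := by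
  have hfloor : (⌊c * x ^ 2⌋₊ : ℝ) = ⌊c * x ^ 2⌋ := natCast_floor_eq_intCast_floor (by positivity)
  rw [mem_Ico_sqrt_div_iff hc hx, hfloor]
  exact ⟨Int.floor_le _, by rw [Int.fract] at h; linarith⟩

theorem pairwise_disjoint_Ioo_sqrt_div (hc : 0 < c) (hδ : δ ≤ 1) :
    Pairwise (Disjoint on fun n : ℕ => Ioo √(n / c) √((n + δ) / c)) := by
  have hmono : Monotone fun n : ℕ => √(n / c) := fun m n hmn =>
    Real.sqrt_le_sqrt (div_le_div_of_nonneg_right (by exact_mod_cast hmn) hc.le)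
  refine hmono.pairwise_disjoint_on_Ico_succ.mono fun m n h => h.mono ?_ ?_ <;>
    exact Ioo_subset_Ico_self.trans (Ico_subset_Ico_right (Real.sqrt_le_sqrt (by gcongr; simpa)))

theorem biUnion_Ioo_subset_setOf_fract_mul_sq_lt_inter_Ioc (hc : 0 < c) (hδ : δ ≤ 1)
    (hk : 0 ≤ k) :
    ⋃ n ∈ range ⌊c * k ^ 2⌋₊, Ioo √(n / c) √((n + δ) / c) ⊆
      {x | Int.fract (c * x ^ 2) < δ} ∩ Ioc 0 k := by
  intro x hx
  obtain ⟨n, hn, hxn⟩ := mem_iUnion₂.1 hx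
  have hx0 : 0 < x := (Real.sqrt_nonneg _).trans_lt hxn.1
  have hnM : (n : ℝ) + 1 ≤ ⌊c * k ^ 2⌋₊ := by exact_mod_cast mem_range.1 hn
  have hnk : (n : ℝ) + 1 ≤ c * k ^ 2 := hnM.trans (Nat.floor_le (by positivity))
  refine ⟨fract_mul_sq_lt_of_mem_Ico hc hδ hx0.le (Ioo_subset_Ico_self hxn), hx0, ?_⟩
  refine hxn.2.le.trans ((Real.sqrt_le_left hk).2 ?_)
  rw [div_le_iff₀ hc]
  linarith

theorem setOf_fract_mul_sq_lt_inter_Ioc_subset_biUnion_Ico (hc : 0 < c) :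
    {x | Int.fract (c * x ^ 2) < δ} ∩ Ioc 0 k ⊆
      ⋃ n ∈ range (⌊c * k ^ 2⌋₊ + 1), Ico √(n / c) √((n + δ) / c) := by
  rintro x ⟨hxδ, hx0, hxk⟩
  have hxk2 : c * x ^ 2 ≤ c * k ^ 2 := by gcongr
  exact mem_iUnion₂.2 ⟨_, mem_range.2 (Nat.lt_succ_of_le (Nat.floor_le_floor hxk2)),
    mem_Ico_of_fract_mul_sq_lt hc hx0.le hxδ⟩

theorem ofReal_sub_inv_sqrt_le_volume_setOf_fract_mul_sq_lt_inter_Ioc (hc : 0 < c) (hδ₀ : 0 ≤ δ)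
    (hδ₁ : δ ≤ 1) (hk : 0 ≤ k) :
    ENNReal.ofReal (δ * k - (√c)⁻¹) ≤ volume ({x | Int.fract (c * x ^ 2) < δ} ∩ Ioc 0 k) := by
  set M := ⌊c * k ^ 2⌋₊
  have hM : k ≤ √(M / c) + (√c)⁻¹ := calc
    k = √(c * k ^ 2 / c) := by rw [mul_div_cancel_left₀ _ hc.ne', Real.sqrt_sq hk]
    _ ≤ √(M / c + 1 / c) := Real.sqrt_le_sqrt <| by
      rw [← add_div]; gcongr; exact (Nat.lt_floor_add_one _).le
    _ ≤ √(M / c) + (√c)⁻¹ := by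
      rw [← Real.sqrt_inv, ← one_div]
      exact Real.sqrt_add_le_add_sqrt (by positivity) (by positivity)
  have hsum : δ * k - (√c)⁻¹ ≤ ∑ n ∈ range M, (√((n + δ) / c) - √(n / c)) := by
    have := (concaveOn_sqrt_div hc.le).mul_sub_le_sum_sub hδ₀ hδ₁ M
    simp only [zero_div, Real.sqrt_zero, sub_zero] at this
    nlinarith [inv_nonneg.2 (Real.sqrt_nonneg c)]
  calc ENNReal.ofReal (δ * k - (√c)⁻¹)
      ≤ ENNReal.ofReal (∑ n ∈ range M, (√((n + δ) / c) - √(n / c))) :=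
        ENNReal.ofReal_le_ofReal hsum
    _ = ∑ n ∈ range M, volume (Ioo √(n / c) √((n + δ) / c)) := by
        rw [ENNReal.ofReal_sum_of_nonneg fun n _ =>
          sub_nonneg.2 (Real.sqrt_le_sqrt (by gcongr; linarith))]
        simp only [Real.volume_Ioo]
    _ = volume (⋃ n ∈ range M, Ioo √(n / c) √((n + δ) / c)) :=
        (measure_biUnion_finset ((pairwise_disjoint_Ioo_sqrt_div hc hδ₁).set_pairwise _)
          fun _ _ => measurableSet_Ioo).symm
    _ ≤ _ := measure_mono (biUnion_Ioo_subset_setOf_fract_mul_sq_lt_inter_Ioc hc hδ₁ hk)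

theorem volume_setOf_fract_mul_sq_lt_inter_Ioc_le_ofReal_add_inv_sqrt (hc : 0 < c) (hδ₀ : 0 ≤ δ)
    (hδ₁ : δ ≤ 1) (hk : 0 ≤ k) :
    volume ({x | Int.fract (c * x ^ 2) < δ} ∩ Ioc 0 k) ≤ ENNReal.ofReal (δ * k + (√c)⁻¹) := by
  set M := ⌊c * k ^ 2⌋₊
  have hM : √(M / c) ≤ k := (Real.sqrt_le_left hk).2 <| by
    rw [div_le_iff₀ hc, mul_comm]; exact Nat.floor_le (by positivity)
  have hδ : √(δ / c) ≤ (√c)⁻¹ := by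
    rw [← Real.sqrt_inv, inv_eq_one_div]; exact Real.sqrt_le_sqrt (by gcongr)
  have hsum : ∑ n ∈ range (M + 1), (√((n + δ) / c) - √(n / c)) ≤ δ * k + (√c)⁻¹ := by
    have := (concaveOn_sqrt_div hc.le).sum_sub_le hδ₀ M
    simp only [zero_div, Real.sqrt_zero, sub_zero] at this
    nlinarith
  calc volume ({x | Int.fract (c * x ^ 2) < δ} ∩ Ioc 0 k)
      ≤ volume (⋃ n ∈ range (M + 1), Ico √(n / c) √((n + δ) / c)) :=
        measure_mono (setOf_fract_mul_sq_lt_inter_Ioc_subset_biUnion_Ico hc)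
    _ ≤ ∑ n ∈ range (M + 1), volume (Ico √(n / c) √((n + δ) / c)) :=
        measure_biUnion_finset_le _ _
    _ = ENNReal.ofReal (∑ n ∈ range (M + 1), (√((n + δ) / c) - √(n / c))) := by
        rw [ENNReal.ofReal_sum_of_nonneg fun n _ =>
          sub_nonneg.2 (Real.sqrt_le_sqrt (by gcongr; linarith))]
        simp only [Real.volume_Ico]
    _ ≤ ENNReal.ofReal (δ * k + (√c)⁻¹) := ENNReal.ofReal_le_ofReal hsum

theorem abs_toReal_volume_setOf_fract_mul_sq_lt_inter_Ioc_sub_le (hc : 0 < c) (hδ₀ : 0 ≤ δ)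
    (hδ₁ : δ ≤ 1) (hk : 0 ≤ k) :
    |(volume ({x | Int.fract (c * x ^ 2) < δ} ∩ Ioc 0 k)).toReal - δ * k| ≤ (√c)⁻¹ := by
  have hupper := volume_setOf_fract_mul_sq_lt_inter_Ioc_le_ofReal_add_inv_sqrt hc hδ₀ hδ₁ hk
  have hlower := ofReal_sub_inv_sqrt_le_volume_setOf_fract_mul_sq_lt_inter_Ioc hc hδ₀ hδ₁ hk
  rw [ENNReal.ofReal_le_iff_le_toReal (ne_top_of_le_ne_top ENNReal.ofReal_ne_top hupper)] at hlower
  have := ENNReal.toReal_le_of_le_ofReal (by positivity) hupper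
  exact abs_sub_le_iff.2 ⟨by linarith, by linarith⟩

end FractMulSq

theorem tendsto_div_of_abs_sub_mul_le {g : ℝ → ℝ} {a C : ℝ}
    (h : ∀ᶠ k in atTop, |g k - a * k| ≤ C) :
    Tendsto (fun k => g k / k) atTop (nhds a) := by
  rw [tendsto_iff_norm_sub_tendsto_zero]
  refine squeeze_zero' (g := fun k => C / k) (Eventually.of_forall fun _ => norm_nonneg _) ?_
    (tendsto_const_nhds.div_atTop tendsto_id)
  filter_upwards [h, eventually_gt_atTop 0] with k hk hk0
  rw [Real.norm_eq_abs, show g k / k - a = (g k - a * k) / k by field_simp, abs_div,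
    abs_of_pos hk0]
  exact div_le_div_of_nonneg_right hk hk0.le

/-- Theorem 3: if `X ~ U((0,k])`, then `{πX²}` converges in law to the
uniform distribution on `[0,1)` as `k → ∞`. -/
theorem uniform_pi_sq_benford_limit
    (μ : ℝ → Measure ℝ)
    (hμ : ∀ k : ℝ, 0 < k →
      μ k = (ENNReal.ofReal k)⁻¹ • volume.restrict (Ioc 0 k)) :
    ∀ δ ∈ Ioo (0 : ℝ) 1,
      Tendsto (fun k => ((μ k) {x : ℝ | Int.fract (π * x ^ 2) < δ}).toReal)
        atTop (nhds δ) := by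
  rintro δ ⟨hδ₀, hδ₁⟩
  have hS : MeasurableSet {x : ℝ | Int.fract (π * x ^ 2) < δ} :=
    measurableSet_lt (by fun_prop) measurable_const
  refine (tendsto_div_of_abs_sub_mul_le
    (g := fun k => (volume ({x : ℝ | Int.fract (π * x ^ 2) < δ} ∩ Ioc 0 k)).toReal)
    (C := (√π)⁻¹) ?_).congr' ?_
  · filter_upwards [eventually_ge_atTop 0] with k hk using
      abs_toReal_volume_setOf_fract_mul_sq_lt_inter_Ioc_sub_le Real.pi_pos hδ₀.le hδ₁.le hk
  · filter_upwards [eventually_gt_atTop 0] with k hk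
    rw [hμ k hk, Measure.smul_apply, Measure.restrict_apply hS, smul_eq_mul, ENNReal.toReal_mul,
      ENNReal.toReal_inv, ENNReal.toReal_ofReal hk.le, inv_mul_eq_div]
end

section
/- For a = k√π and any δ ∈ (0,1), if X is uniform on (0,k] and Y = πX², then (δ/a)·(√(⌊a²−δ⌋+1+δ) − √δ) ≤ P({Y} < δ) ≤ (δ/a)·√(⌊a²−δ⌋+1) + √δ/a. -/
/-!
Substituting `t = √π x` turns the probability into `a⁻¹` times the length of
`{t ∈ (0, a] | {t²} < δ}`, the part of `⋃ₙ [√n, √(n + δ))` inside `(0, a]`. The intervals with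
`n < ⌊a² - δ⌋ + 1` lie in `(0, a]` and those with `n > ⌊a² - δ⌋ + 1` miss it. By concavity
of `√`, the length `√(n + δ) - √n` is at least `δ` times the increment of `√` over
`[n + δ, n + 1 + δ]` and, for `n ≥ 1`, at most `δ` times its increment over `[n - 1, n]`;
both sums then telescope.
-/

open MeasureTheory Set
open scoped Real

theorem ConcaveOn.mul_sub_le_mul_sub_adjacent {f : ℝ → ℝ} {s : Set ℝ} (hf : ConcaveOn ℝ s f)
    {x y z : ℝ} (hx : x ∈ s) (hz : z ∈ s) (hxy : x < y) (hyz : y < z) :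
    (y - x) * (f z - f y) ≤ (z - y) * (f y - f x) := by
  have := hf.slope_anti_adjacent hx hz hxy hyz
  rwa [div_le_div_iff₀ (sub_pos.2 hyz) (sub_pos.2 hxy), mul_comm, mul_comm (f y - f x)] at this

section Telescoping

variable {f : ℝ → ℝ} {δ : ℝ}

theorem ConcaveOn.mul_sub_le_sum_sub_natCast_add (hf : ConcaveOn ℝ (Ici 0) f) (hδ : 0 < δ)
    (N : ℕ) : δ * (f (N + δ) - f δ) ≤ ∑ n ∈ Finset.range N, (f (n + δ) - f n) := by
  induction N with
  | zero => simp
  | succ N ih =>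
    have hN : (0 : ℝ) ≤ N := N.cast_nonneg
    have := hf.mul_sub_le_mul_sub_adjacent (x := N) (y := N + δ) (z := N + 1 + δ)
      hN (by simp only [mem_Ici]; linarith) (by linarith) (by linarith)
    rw [Finset.sum_range_succ]
    push_cast
    linarith

theorem ConcaveOn.sum_sub_natCast_add_le (hf : ConcaveOn ℝ (Ici 0) f) (hδ : 0 < δ) (N : ℕ) :
    ∑ n ∈ Finset.range (N + 1), (f (n + δ) - f n) ≤ f δ - f 0 + δ * (f N - f 0) := by
  induction N with
  | zero => simp
  | succ N ih =>
    have hN : (0 : ℝ) ≤ N := N.cast_nonneg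
    have := hf.mul_sub_le_mul_sub_adjacent (x := N) (y := N + 1) (z := N + 1 + δ)
      hN (by simp only [mem_Ici]; linarith) (by linarith) (by linarith)
    rw [Finset.sum_range_succ]
    push_cast
    linarith

end Telescoping

theorem Int.fract_lt_of_natCast_le_of_lt_add {y δ : ℝ} {n : ℕ} (hδ : δ ≤ 1) (hny : (n : ℝ) ≤ y)
    (hyn : y < n + δ) : Int.fract y < δ := by
  rw [← Int.fract_sub_natCast y n, Int.fract_eq_self.2 ⟨by linarith, by linarith⟩]
  linarith

theorem lt_natFloor_add_of_fract_lt {y δ : ℝ} (hy : 0 ≤ y) (h : Int.fract y < δ) :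
    y < ⌊y⌋₊ + δ := by
  rw [natCast_floor_eq_intCast_floor hy]
  linarith [Int.self_sub_floor y]

section SqrtIntervals

variable {a δ : ℝ}

theorem biUnion_Ioo_sqrt_subset_fract_sq_lt_inter_Ioc (ha : 0 ≤ a) (hδ : δ ≤ 1) {N : ℕ}
    (hN : (N : ℝ) - 1 + δ ≤ a ^ 2) :
    ⋃ n ∈ Finset.range N, Ioo √n √(n + δ) ⊆ {t : ℝ | Int.fract (t ^ 2) < δ} ∩ Ioc 0 a := by
  simp only [iUnion_subset_iff, Finset.mem_range]
  intro n hn t ⟨hnt, htn⟩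
  have ht : 0 < t := (Real.sqrt_nonneg _).trans_lt hnt
  have hn' : (n : ℝ) + 1 ≤ N := by exact_mod_cast hn
  refine ⟨Int.fract_lt_of_natCast_le_of_lt_add hδ ?_ ((Real.lt_sqrt ht.le).1 htn), ht, ?_⟩
  · exact ((Real.sqrt_lt' ht).1 hnt).le
  · exact htn.le.trans ((Real.sqrt_le_left ha).2 (by linarith))

theorem fract_sq_lt_inter_Ioc_subset_biUnion_Ico_sqrt {N : ℕ} (hN : a ^ 2 < N + 1) :
    {t : ℝ | Int.fract (t ^ 2) < δ} ∩ Ioc 0 a ⊆ ⋃ n ∈ Finset.range (N + 1), Ico √n √(n + δ) := by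
  rintro t ⟨htδ, ht, hta⟩
  have hfloor : (⌊t ^ 2⌋₊ : ℝ) ≤ t ^ 2 := Nat.floor_le (sq_nonneg t)
  simp only [mem_iUnion, Finset.mem_range, exists_prop]
  refine ⟨⌊t ^ 2⌋₊, ?_, ?_, ?_⟩
  · have : (⌊t ^ 2⌋₊ : ℝ) < N + 1 := by nlinarith
    exact_mod_cast this
  · exact (Real.sqrt_le_left ht.le).2 hfloor
  · exact (Real.lt_sqrt ht.le).2 (lt_natFloor_add_of_fract_lt (sq_nonneg t) htδ)

theorem pairwiseDisjoint_Ioo_sqrt (hδ : δ ≤ 1) (s : Finset ℕ) :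
    (s : Set ℕ).PairwiseDisjoint fun n => Ioo √n √(n + δ) := by
  have hmono : Monotone fun n : ℕ => √n := fun m n h => Real.sqrt_le_sqrt (by exact_mod_cast h)
  intro m _ n _ hmn
  refine (hmono.pairwise_disjoint_on_Ioo_succ hmn).mono ?_ ?_ <;>
  · refine Ioo_subset_Ioo_right (Real.sqrt_le_sqrt ?_)
    push_cast [Order.succ_eq_add_one]
    linarith

theorem le_volume_real_fract_sq_lt_inter_Ioc (ha : 0 ≤ a) (hδ₀ : 0 < δ) (hδ₁ : δ ≤ 1) {N : ℕ}
    (hN : (N : ℝ) - 1 + δ ≤ a ^ 2) :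
    δ * (√(N + δ) - √δ) ≤ volume.real ({t : ℝ | Int.fract (t ^ 2) < δ} ∩ Ioc 0 a) :=
  calc δ * (√(N + δ) - √δ) ≤ ∑ n ∈ Finset.range N, (√(n + δ) - √n) :=
        Real.strictConcaveOn_sqrt.concaveOn.mul_sub_le_sum_sub_natCast_add hδ₀ N
    _ = volume.real (⋃ n ∈ Finset.range N, Ioo √n √(n + δ)) := by
        rw [measureReal_biUnion_finset (pairwiseDisjoint_Ioo_sqrt hδ₁ _)
          (fun _ _ => measurableSet_Ioo) fun _ _ => measure_Ioo_lt_top.ne]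
        refine Finset.sum_congr rfl fun n _ => ?_
        rw [Real.volume_real_Ioo_of_le (Real.sqrt_le_sqrt (by linarith))]
    _ ≤ _ := measureReal_mono (biUnion_Ioo_sqrt_subset_fract_sq_lt_inter_Ioc ha hδ₁ hN)
        (measure_ne_top_of_subset inter_subset_right measure_Ioc_lt_top.ne)

theorem volume_real_fract_sq_lt_inter_Ioc_le (hδ : 0 < δ) {N : ℕ} (hN : a ^ 2 < N + 1) :
    volume.real ({t : ℝ | Int.fract (t ^ 2) < δ} ∩ Ioc 0 a) ≤ δ * √N + √δ :=
  calc volume.real ({t : ℝ | Int.fract (t ^ 2) < δ} ∩ Ioc 0 a)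
      ≤ volume.real (⋃ n ∈ Finset.range (N + 1), Ico √n √(n + δ)) :=
        measureReal_mono (fract_sq_lt_inter_Ioc_subset_biUnion_Ico_sqrt hN)
          (measure_biUnion_lt_top (Finset.finite_toSet _) fun _ _ => measure_Ico_lt_top).ne
    _ ≤ ∑ n ∈ Finset.range (N + 1), (√(n + δ) - √n) := by
        refine (measureReal_biUnion_finset_le _ _).trans_eq (Finset.sum_congr rfl fun n _ => ?_)
        rw [Real.volume_real_Ico_of_le (Real.sqrt_le_sqrt (by linarith))]
    _ ≤ √δ - √0 + δ * (√N - √0) :=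
        Real.strictConcaveOn_sqrt.concaveOn.sum_sub_natCast_add_le hδ N
    _ = δ * √N + √δ := by rw [Real.sqrt_zero]; ring

end SqrtIntervals

theorem volume_real_fract_mul_sq_lt_inter_Ioc {c : ℝ} (hc : 0 < c) (k δ : ℝ) :
    volume.real ({x : ℝ | Int.fract (c * x ^ 2) < δ} ∩ Ioc 0 k)
      = volume.real ({t : ℝ | Int.fract (t ^ 2) < δ} ∩ Ioc 0 (k * √c)) / √c := by
  have hc' : 0 < √c := Real.sqrt_pos.2 hc
  have hpre : {x : ℝ | Int.fract (c * x ^ 2) < δ} ∩ Ioc 0 k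
      = (√c * ·) ⁻¹' ({t : ℝ | Int.fract (t ^ 2) < δ} ∩ Ioc 0 (k * √c)) := by
    ext x
    simp [mul_pow, Real.sq_sqrt hc.le, mul_pos_iff_of_pos_left hc', mul_comm k,
      mul_le_mul_iff_right₀ hc']
  rw [hpre, measureReal_def, Real.volume_preimage_mul_left hc'.ne', ENNReal.toReal_mul,
    ENNReal.toReal_ofReal (abs_nonneg _), abs_inv, abs_of_pos hc', ← measureReal_def,
    inv_mul_eq_div]

/-- Key estimate in the proof of Theorem 3: for `X ~ U((0,k])`, `Y = πX²`,
`a = k√π` and `δ ∈ (0,1)`,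
`(δ/a)(√(⌊a²−δ⌋+1+δ) − √δ) ≤ P({Y} < δ) ≤ (δ/a)√(⌊a²−δ⌋+1) + √δ/a`. -/
theorem uniform_pi_sq_fract_bounds
    (k : ℝ) (hk : 0 < k)
    (μ : Measure ℝ)
    (hμ : μ = (ENNReal.ofReal k)⁻¹ • volume.restrict (Ioc 0 k))
    (a : ℝ) (ha : a = k * Real.sqrt π)
    (δ : ℝ) (hδ : δ ∈ Ioo (0 : ℝ) 1) :
    (δ / a) * (Real.sqrt ((⌊a ^ 2 - δ⌋ : ℝ) + 1 + δ) - Real.sqrt δ)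
        ≤ (μ {x : ℝ | Int.fract (π * x ^ 2) < δ}).toReal ∧
    (μ {x : ℝ | Int.fract (π * x ^ 2) < δ}).toReal
        ≤ (δ / a) * Real.sqrt ((⌊a ^ 2 - δ⌋ : ℝ) + 1) + Real.sqrt δ / a := by
  obtain ⟨hδ₀, hδ₁⟩ := hδ
  have ha₀ : 0 < a := ha ▸ mul_pos hk (Real.sqrt_pos.2 Real.pi_pos)
  have hμS : (μ {x : ℝ | Int.fract (π * x ^ 2) < δ}).toReal
      = volume.real ({t : ℝ | Int.fract (t ^ 2) < δ} ∩ Ioc 0 a) / a := by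
    rw [← measureReal_def, hμ, measureReal_ennreal_smul_apply,
      measureReal_restrict_apply' measurableSet_Ioc,
      volume_real_fract_mul_sq_lt_inter_Ioc Real.pi_pos, ENNReal.toReal_inv,
      ENNReal.toReal_ofReal hk.le, ha]
    ring
  have hfloor : -1 ≤ ⌊a ^ 2 - δ⌋ := Int.le_floor.2 (by push_cast; nlinarith)
  obtain ⟨N, hN⟩ := Int.eq_ofNat_of_zero_le (by omega : 0 ≤ ⌊a ^ 2 - δ⌋ + 1)
  have hNr : (⌊a ^ 2 - δ⌋ : ℝ) + 1 = N := by exact_mod_cast hN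
  have hfloor_le := Int.floor_le (a ^ 2 - δ)
  have hlt_floor := Int.lt_floor_add_one (a ^ 2 - δ)
  rw [hμS, hNr, div_mul_eq_mul_div, div_mul_eq_mul_div, ← add_div,
    div_le_div_iff_of_pos_right ha₀, div_le_div_iff_of_pos_right ha₀]
  exact ⟨le_volume_real_fract_sq_lt_inter_Ioc ha₀.le hδ₀ hδ₁.le (by linarith),
    volume_real_fract_sq_lt_inter_Ioc_le hδ₀ (by linarith)⟩
end

section
/- Let X be exponentially distributed with rate λ > 0, and set Y = πX². Then {Y} converges in law to the uniform distribution on [0, 1) as λ → 0⁺; i.e., for every δ ∈ (0, 1), P({Y} < δ) → δ as λ → 0⁺. -/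
/-!
Write `F(t) = exp (-c √t)` with `c = λ / √π`, so that `P(πX² ≥ t) = F(t)` and
`P({πX²} < δ) = ∑ₙ (F(n) - F(n + δ))`. Since `F` is convex and decreasing from `F(0) = 1`
to `0`, comparing secant slopes gives `δ (F(n) - F(n+1)) ≤ F(n) - F(n+δ)` and
`F(n+1) - F(n+1+δ) ≤ δ (F(n) - F(n+1))`; summing the telescoping series yields
`δ ≤ P({πX²} < δ) ≤ δ + 1 - F(δ)`, and `F(δ) → 1` as `λ → 0⁺`.
-/

open MeasureTheory Set Filter ProbabilityTheory Topology Function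
open scoped Real

section ConvexSeries

variable {F : ℝ → ℝ} {δ : ℝ}

lemma ConvexOn.mul_sub_le_sub_add (hF : ConvexOn ℝ (Ici 0) F) {t : ℝ} (ht : 0 ≤ t)
    (hδ0 : 0 < δ) (hδ1 : δ ≤ 1) : δ * (F t - F (t + 1)) ≤ F t - F (t + δ) := by
  have h := hF.secant_mono (a := t) (x := t + δ) (y := t + 1) ht
    (by simp only [mem_Ici]; linarith) (by simp only [mem_Ici]; linarith)
    (by linarith : t < t + δ).ne' (by linarith : t < t + 1).ne' (by linarith)
  rw [add_sub_cancel_left, add_sub_cancel_left, div_one, div_le_iff₀ hδ0] at h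
  linarith

lemma ConvexOn.sub_add_le_mul_sub (hF : ConvexOn ℝ (Ici 0) F) {t : ℝ} (ht : 0 ≤ t)
    (hδ0 : 0 < δ) : F (t + 1) - F (t + 1 + δ) ≤ δ * (F t - F (t + 1)) := by
  have h := hF.secant_mono (a := t + 1) (x := t) (y := t + 1 + δ)
    (by simp only [mem_Ici]; linarith) ht (by simp only [mem_Ici]; linarith)
    (by linarith : t < t + 1).ne (by linarith : t + 1 < t + 1 + δ).ne' (by linarith)
  rw [show t - (t + 1) = -1 by ring, add_sub_cancel_left, div_neg, div_one,
    le_div_iff₀ hδ0] at h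
  linarith

lemma AntitoneOn.hasSum_sub_succ (hF : AntitoneOn F (Ici 0))
    (hlim : Tendsto (fun n : ℕ => F n) atTop (𝓝 0)) :
    HasSum (fun n : ℕ => F n - F (n + 1)) (F 0) := by
  rw [hasSum_iff_tendsto_nat_of_nonneg fun n => sub_nonneg.2 <|
    hF (mem_Ici.2 n.cast_nonneg) (mem_Ici.2 (by positivity)) (by linarith)]
  have hpartial (n : ℕ) : ∑ i ∈ Finset.range n, (F i - F (i + 1)) = F 0 - F n := by
    simpa using Finset.sum_range_sub' (fun i : ℕ => F i) n
  simpa [hpartial] using hlim.const_sub (F 0)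

lemma AntitoneOn.summable_sub_add (hF : AntitoneOn F (Ici 0))
    (hlim : Tendsto (fun n : ℕ => F n) atTop (𝓝 0)) (hδ0 : 0 ≤ δ) (hδ1 : δ ≤ 1) :
    Summable (fun n : ℕ => F n - F (n + δ)) :=
  (hF.hasSum_sub_succ hlim).summable.of_nonneg_of_le
    (fun n => sub_nonneg.2 <|
      hF (mem_Ici.2 n.cast_nonneg) (mem_Ici.2 (by positivity)) (by linarith))
    (fun n => sub_le_sub_left
      (hF (mem_Ici.2 (by positivity)) (mem_Ici.2 (by positivity)) (by linarith)) _)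

variable (hconv : ConvexOn ℝ (Ici 0) F) (hanti : AntitoneOn F (Ici 0))
  (hlim : Tendsto (fun n : ℕ => F n) atTop (𝓝 0))
include hconv hanti hlim

lemma ConvexOn.mul_le_tsum_sub_add (hδ0 : 0 < δ) (hδ1 : δ ≤ 1) :
    δ * F 0 ≤ ∑' n : ℕ, (F n - F (n + δ)) := by
  have hsum := (hanti.hasSum_sub_succ hlim).mul_left δ
  rw [← hsum.tsum_eq]
  exact hsum.summable.tsum_le_tsum (fun n => hconv.mul_sub_le_sub_add n.cast_nonneg hδ0 hδ1)
    (hanti.summable_sub_add hlim hδ0.le hδ1)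

lemma ConvexOn.tsum_sub_add_le (hδ0 : 0 < δ) (hδ1 : δ ≤ 1) :
    ∑' n : ℕ, (F n - F (n + δ)) ≤ F 0 - F δ + δ * F 0 := by
  have hsum := (hanti.hasSum_sub_succ hlim).mul_left δ
  have hs := hanti.summable_sub_add hlim hδ0.le hδ1
  have htail : ∑' n : ℕ, (F (n + 1 : ℕ) - F ((n + 1 : ℕ) + δ)) ≤ δ * F 0 := by
    rw [← hsum.tsum_eq]
    refine ((summable_nat_add_iff 1).2 hs).tsum_le_tsum (fun n => ?_) hsum.summable
    push_cast
    exact hconv.sub_add_le_mul_sub n.cast_nonneg hδ0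
  rw [hs.tsum_eq_zero_add]
  simpa using htail

end ConvexSeries

section ExpNegMulSqrt

variable {c : ℝ}

lemma convexOn_exp_neg_mul_sqrt (hc : 0 ≤ c) :
    ConvexOn ℝ (Ici 0) fun t => Real.exp (-(c * √t)) := by
  refine ⟨convex_Ici 0, fun x hx y hy a b ha hb hab => ?_⟩
  have hsqrt := Real.strictConcaveOn_sqrt.concaveOn.2 hx hy ha hb hab
  simp only [smul_eq_mul] at hsqrt ⊢
  calc Real.exp (-(c * √(a * x + b * y)))
      ≤ Real.exp (a * -(c * √x) + b * -(c * √y)) := by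
        gcongr
        nlinarith [mul_le_mul_of_nonneg_left hsqrt hc]
    _ ≤ a * Real.exp (-(c * √x)) + b * Real.exp (-(c * √y)) :=
        convexOn_exp.2 (mem_univ _) (mem_univ _) ha hb hab

lemma antitone_exp_neg_mul_sqrt (hc : 0 ≤ c) : Antitone fun t => Real.exp (-(c * √t)) :=
  fun _ _ h => Real.exp_le_exp.2 <| neg_le_neg <|
    mul_le_mul_of_nonneg_left (Real.sqrt_le_sqrt h) hc

lemma tendsto_exp_neg_mul_sqrt_natCast (hc : 0 < c) :
    Tendsto (fun n : ℕ => Real.exp (-(c * √n))) atTop (𝓝 0) :=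
  Real.tendsto_exp_atBot.comp <| tendsto_neg_atTop_atBot.comp <|
    (Real.tendsto_sqrt_atTop.comp tendsto_natCast_atTop_atTop).const_mul_atTop hc

lemma tsum_exp_neg_mul_sqrt_sub_mem_Icc (hc : 0 < c) {δ : ℝ} (hδ0 : 0 < δ) (hδ1 : δ ≤ 1) :
    ∑' n : ℕ, (Real.exp (-(c * √n)) - Real.exp (-(c * √(n + δ))))
      ∈ Icc δ (1 - Real.exp (-(c * √δ)) + δ) := by
  have hconv := convexOn_exp_neg_mul_sqrt hc.le
  have hanti := (antitone_exp_neg_mul_sqrt hc.le).antitoneOn (Ici 0)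
  have hlim := tendsto_exp_neg_mul_sqrt_natCast hc
  constructor
  · simpa using hconv.mul_le_tsum_sub_add hanti hlim hδ0 hδ1
  · simpa using hconv.tsum_sub_add_le hanti hlim hδ0 hδ1

end ExpNegMulSqrt

lemma pairwise_disjoint_Ico_natCast_add {δ : ℝ} (hδ : δ ≤ 1) :
    Pairwise (Disjoint on fun n : ℕ => Ico (n : ℝ) (n + δ)) := by
  intro m n hmn
  have h := pairwise_disjoint_Ico_intCast ℝ (by exact_mod_cast hmn : (m : ℤ) ≠ n)
  simp only [Function.onFun, Int.cast_natCast] at h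
  exact h.mono (Ico_subset_Ico_right (by linarith)) (Ico_subset_Ico_right (by linarith))

lemma Int.fract_lt_iff_exists_natCast {y δ : ℝ} (hy : 0 ≤ y) (hδ : δ ≤ 1) :
    Int.fract y < δ ↔ ∃ n : ℕ, y ∈ Ico (n : ℝ) (n + δ) := by
  constructor
  · intro h
    refine ⟨⌊y⌋₊, Nat.floor_le hy, ?_⟩
    have hfloor : ((⌊y⌋₊ : ℤ) : ℝ) = ⌊y⌋ := by exact_mod_cast Int.natCast_floor_eq_floor hy
    rw [← Int.self_sub_floor, ← hfloor] at h
    push_cast at h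
    linarith
  · rintro ⟨n, hn, hnδ⟩
    have hfloor : ⌊y⌋ = n := Int.floor_eq_iff.2 ⟨by exact_mod_cast hn, by push_cast; linarith⟩
    rw [← Int.self_sub_floor, hfloor]
    push_cast
    linarith

lemma Ici_inter_preimage_mul_sq_Ico {c a b : ℝ} (hc : 0 < c) :
    Ici 0 ∩ (fun x : ℝ => c * x ^ 2) ⁻¹' Ico a b = Ico √(a / c) √(b / c) := by
  ext x
  simp only [mem_inter_iff, mem_Ici, mem_preimage, mem_Ico]
  constructor
  · rintro ⟨hx, ha, hb⟩
    exact ⟨Real.sqrt_le_iff.2 ⟨hx, (div_le_iff₀' hc).2 ha⟩,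
      (Real.lt_sqrt hx).2 ((lt_div_iff₀' hc).2 hb)⟩
  · rintro ⟨ha, hb⟩
    have hx := (Real.sqrt_nonneg _).trans ha
    exact ⟨hx, (div_le_iff₀' hc).1 (Real.sqrt_le_iff.1 ha).2,
      (lt_div_iff₀' hc).1 ((Real.lt_sqrt hx).1 hb)⟩

section ExpMeasure

variable {r : ℝ}

lemma expMeasure_eq_withDensity (r : ℝ) :
    expMeasure r = volume.withDensity
      (fun x => ENNReal.ofReal (if 0 ≤ x then r * Real.exp (-r * x) else 0)) := by
  simp_rw [neg_mul, ← exponentialPDF_eq]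
  rfl

lemma expMeasure_Iio_zero : expMeasure r (Iio 0) = 0 := by
  rw [expMeasure_eq_withDensity, withDensity_apply _ measurableSet_Iio]
  simp_rw [neg_mul, ← exponentialPDF_eq]
  exact lintegral_exponentialPDF_of_nonpos le_rfl

lemma expMeasure_Ico (hr : 0 < r) {a b : ℝ} (ha : 0 ≤ a) (hab : a ≤ b) :
    expMeasure r (Ico a b) = ENNReal.ofReal (Real.exp (-(r * a)) - Real.exp (-(r * b))) := by
  have hprob := isProbabilityMeasure_expMeasure hr
  have hnull : NullSingletonClass (expMeasure r) := by
    rw [expMeasure_eq_withDensity]; infer_instance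
  rw [measure_congr Ico_ae_eq_Ioc, ← measure_cdf (expMeasure r), StieltjesFunction.measure_Ioc,
    cdf_expMeasure_eq hr, cdf_expMeasure_eq hr, if_pos ha, if_pos (ha.trans hab)]
  ring_nf

lemma expMeasure_fract_mul_sq_lt_toReal (hr : 0 < r) {c δ : ℝ} (hc : 0 < c) (hδ0 : 0 ≤ δ)
    (hδ1 : δ ≤ 1) :
    (expMeasure r {x | Int.fract (c * x ^ 2) < δ}).toReal
      = ∑' n : ℕ, (Real.exp (-(r / √c * √n)) - Real.exp (-(r / √c * √(n + δ)))) := by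
  set g := fun x : ℝ => c * x ^ 2
  have hunion : Ici 0 ∩ {x | Int.fract (g x) < δ} = ⋃ n : ℕ, Ici 0 ∩ g ⁻¹' Ico (n : ℝ) (n + δ) := by
    ext x
    simp only [mem_inter_iff, mem_Ici, mem_ofPred_eq, mem_iUnion, mem_preimage]
    constructor
    · rintro ⟨hx, h⟩
      obtain ⟨n, hn⟩ := (Int.fract_lt_iff_exists_natCast (by positivity) hδ1).1 h
      exact ⟨n, hx, hn⟩
    · rintro ⟨n, hx, hn⟩
      exact ⟨hx, (Int.fract_lt_iff_exists_natCast (by positivity) hδ1).2 ⟨n, hn⟩⟩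
  have hdisj : Pairwise (Disjoint on fun n : ℕ => Ici 0 ∩ g ⁻¹' Ico (n : ℝ) (n + δ)) :=
    (pairwise_disjoint_Ico_natCast_add hδ1).mono fun m n h =>
      (h.preimage g).mono inter_subset_right inter_subset_right
  have hscale (y : ℝ) : r * √(y / c) = r / √c * √y := by
    rw [Real.sqrt_div' y hc.le]; ring
  have hterm (n : ℕ) : expMeasure r (Ici 0 ∩ g ⁻¹' Ico (n : ℝ) (n + δ))
      = ENNReal.ofReal (Real.exp (-(r / √c * √n)) - Real.exp (-(r / √c * √(n + δ)))) := by
    rw [Ici_inter_preimage_mul_sq_Ico hc, expMeasure_Ico hr (Real.sqrt_nonneg _)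
      (by gcongr; linarith), hscale, hscale]
  rw [← measure_inter_conull (t := Ici 0) (by rw [compl_Ici]; exact expMeasure_Iio_zero),
    inter_comm, hunion, measure_iUnion hdisj fun n => measurableSet_Ici.inter
      ((by fun_prop : Measurable g) measurableSet_Ico)]
  simp_rw [hterm]
  rw [ENNReal.tsum_toReal_eq fun _ => ENNReal.ofReal_ne_top]
  refine tsum_congr fun n => ?_
  rw [ENNReal.toReal_ofReal (sub_nonneg.2 <|
    antitone_exp_neg_mul_sqrt (by positivity) (by linarith))]

end ExpMeasure

/-- Theorem 4: if `X ~ EXP(λ)`, then `{πX²}` converges in law to the uniform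
distribution on `[0,1)` as `λ → 0⁺`. -/
theorem exponential_pi_sq_benford_limit
    (μ : ℝ → Measure ℝ)
    (hμ : ∀ l : ℝ, 0 < l → μ l = volume.withDensity
      (fun x => ENNReal.ofReal (if 0 ≤ x then l * Real.exp (-l * x) else 0))) :
    ∀ δ ∈ Ioo (0 : ℝ) 1,
      Tendsto (fun l => ((μ l) {x : ℝ | Int.fract (π * x ^ 2) < δ}).toReal)
        (nhdsWithin 0 (Ioi 0)) (nhds δ) := by
  rintro δ ⟨hδ0, hδ1⟩
  have hbounds : ∀ᶠ l in 𝓝[>] (0 : ℝ), ((μ l) {x : ℝ | Int.fract (π * x ^ 2) < δ}).toReal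
      ∈ Icc δ (1 - Real.exp (-(l / √π * √δ)) + δ) := by
    filter_upwards [self_mem_nhdsWithin] with l (hl : 0 < l)
    rw [hμ l hl, ← expMeasure_eq_withDensity,
      expMeasure_fract_mul_sq_lt_toReal hl Real.pi_pos hδ0.le hδ1.le]
    exact tsum_exp_neg_mul_sqrt_sub_mem_Icc (by positivity) hδ0 hδ1.le
  have hupper : Tendsto (fun l : ℝ => 1 - Real.exp (-(l / √π * √δ)) + δ) (𝓝[>] 0) (𝓝 δ) := by
    have hcont : Continuous fun l : ℝ => 1 - Real.exp (-(l / √π * √δ)) + δ := by fun_prop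
    simpa using (hcont.tendsto 0).mono_left nhdsWithin_le_nhds
  exact tendsto_of_tendsto_of_tendsto_of_le_of_le' tendsto_const_nhds hupper
    (hbounds.mono fun _ h => h.1) (hbounds.mono fun _ h => h.2)
end
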